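/- arXiv:math/0507565 — 4 statements merged into one kernel-verified Lean document; each statement's English description precedes it below -/
import Mathlib

section
/- Let Δ be an operation that assigns to every n ≥ 0 and every simplicial complex Γ on [n] a shifted simplicial complex Δ(Γ) on [n], satisfying: (1) f(Δ(Γ)) = f(Γ); (2) Δ(Γ ∗ {n+1}) = Δ(Γ) ∗ {n+1}; (3) if Γ′ ⊆ Γ then Δ(Γ′) ⊆ Δ(Γ); (4) the total reduced Betti number of Γ is at most that of Δ(Γ). Then Δ(Γ) = Γ for every shifted complex Γ. -/
/-- A simplicial complex on a subset of ℕ: a collection of finite sets closed under inclusion. -/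
def IsComplex (Γ : Finset (Finset ℕ)) : Prop :=
  ∀ F ∈ Γ, ∀ G ⊆ F, G ∈ Γ

/-- Γ is shifted on vertex set [n]: replacing a vertex by a larger one stays in Γ. -/
def IsShifted (Γ : Finset (Finset ℕ)) (n : ℕ) : Prop :=
  ∀ F ∈ Γ, ∀ i ∈ F, ∀ j, i < j → j ≤ n → insert j (F.erase i) ∈ Γ

/-- The facets (maximal faces) of Γ. -/
def facets (Γ : Finset (Finset ℕ)) : Finset (Finset ℕ) :=
  Γ.filter fun F => ∀ G ∈ Γ, F ⊆ G → F = G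

/-- The antistar of a vertex. -/
def ast (Γ : Finset (Finset ℕ)) (v : ℕ) : Finset (Finset ℕ) :=
  Γ.filter fun F => v ∉ F

/-- The link of a vertex. -/
def lk (Γ : Finset (Finset ℕ)) (v : ℕ) : Finset (Finset ℕ) :=
  Γ.filter fun F => v ∉ F ∧ insert v F ∈ Γ

/-- The cone over Γ with apex v. -/
def cone (Γ : Finset (Finset ℕ)) (v : ℕ) : Finset (Finset ℕ) :=
  Γ ∪ Γ.image (insert v)

/-- The simplicial boundary operator on the free vector space with basis all finite subsets of ℕ. -/
noncomputable def sBd (k : Type) [Field k] :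
    (Finset ℕ →₀ k) →ₗ[k] (Finset ℕ →₀ k) :=
  Finsupp.lsum k fun F => LinearMap.toSpanSingleton k (Finset ℕ →₀ k)
    (∑ x ∈ F, ((-1 : k) ^ ((F.filter (· < x)).card)) • Finsupp.single (F.erase x) (1 : k))

/-- Chains supported on faces of Γ of cardinality c. -/
noncomputable def chainSub (k : Type) [Field k] (Γ : Finset (Finset ℕ)) (c : ℕ) :
    Submodule k (Finset ℕ →₀ k) :=
  Finsupp.supported k k {F | F ∈ Γ ∧ F.card = c}

/-- Cycles in cardinality degree c. -/
noncomputable def cyc (k : Type) [Field k] (Γ : Finset (Finset ℕ)) (c : ℕ) :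
    Submodule k (Finset ℕ →₀ k) :=
  chainSub k Γ c ⊓ LinearMap.ker (sBd k)

/-- The reduced Betti number of Γ in "cardinality" degree c (so the reduced simplicial
Betti number β_i(Γ) over k is `bettiC k Γ (i+1)`): the dimension of the homology (cycles
modulo boundaries) of the reduced simplicial chain complex (the empty set is a face, so
the augmentation is built in) with coefficients in the field k. -/
noncomputable def bettiC (k : Type) [Field k] (Γ : Finset (Finset ℕ)) (c : ℕ) : ℕ :=
  Module.finrank k
    (@HasQuotient.Quotient ↥(cyc k Γ c) (Submodule k ↥(cyc k Γ c)) (Submodule.hasQuotient (R := k) (M := ↥(cyc k Γ c)))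
      (Submodule.comap (cyc k Γ c).subtype
        (Submodule.map (sBd k) (chainSub k Γ (c + 1)))))

open Finset Finsupp

section Aux

variable (k : Type) [Field k]

lemma sBd_single (F : Finset ℕ) :
    sBd k (Finsupp.single F 1) =
      ∑ x ∈ F, ((-1 : k) ^ ((F.filter (· < x)).card)) • Finsupp.single (F.erase x) (1 : k) := by
  rw [sBd, Finsupp.lsum_single, LinearMap.toSpanSingleton_apply, one_smul]

noncomputable def hmap (n : ℕ) (Γ : Finset (Finset ℕ)) :
    (Finset ℕ →₀ k) →ₗ[k] (Finset ℕ →₀ k) :=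
  Finsupp.lsum k fun F => LinearMap.toSpanSingleton k (Finset ℕ →₀ k)
    (if n ∉ F ∧ insert n F ∈ Γ then ((-1 : k) ^ F.card) • Finsupp.single (insert n F) (1 : k)
     else 0)

lemma hmap_single (n : ℕ) (Γ : Finset (Finset ℕ)) (F : Finset ℕ) :
    hmap k n Γ (Finsupp.single F 1) =
      (if n ∉ F ∧ insert n F ∈ Γ then ((-1 : k) ^ F.card) • Finsupp.single (insert n F) (1 : k)
       else 0) := by
  rw [hmap, Finsupp.lsum_single, LinearMap.toSpanSingleton_apply, one_smul]

lemma homotopy_single {n : ℕ} {Γ : Finset (Finset ℕ)} (hC : IsComplex Γ)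
    (hsub : ∀ F ∈ Γ, F ⊆ Finset.Icc 1 n) {F : Finset ℕ} (hF : F ∈ Γ)
    (hst : n ∈ F ∨ insert n F ∈ Γ) :
    sBd k (hmap k n Γ (Finsupp.single F 1)) + hmap k n Γ (sBd k (Finsupp.single F 1)) =
      Finsupp.single F 1 := by
  have hle : ∀ x ∈ F, x ≤ n := fun x hx => (Finset.mem_Icc.1 (hsub F hF hx)).2
  by_cases hn : n ∈ F
  · -- apex case
    have h1 : hmap k n Γ (Finsupp.single F 1) = 0 := by
      rw [hmap_single, if_neg]; rintro ⟨h, -⟩; exact h hn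
    rw [h1, map_zero, zero_add, sBd_single, map_sum]
    have hfilt : F.filter (· < n) = F.erase n := by
      ext a
      simp only [Finset.mem_filter, Finset.mem_erase]
      constructor
      · rintro ⟨ha, hlt⟩; exact ⟨Nat.ne_of_lt hlt, ha⟩
      · rintro ⟨hne, ha⟩; exact ⟨ha, lt_of_le_of_ne (hle a ha) hne⟩
    rw [Finset.sum_eq_single_of_mem n hn]
    · rw [map_smul, hmap_single, if_pos, hfilt]
      · rw [Finset.insert_erase hn, smul_smul, ← mul_pow, neg_mul_neg, one_mul, one_pow, one_smul]
      · exact ⟨Finset.notMem_erase n F, by rw [Finset.insert_erase hn]; exact hF⟩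
    · intro x hx hne
      rw [map_smul, hmap_single, if_neg, smul_zero]
      rintro ⟨h, -⟩
      exact h (Finset.mem_erase.2 ⟨(Ne.symm hne), hn⟩)
  · -- base case
    obtain hins : insert n F ∈ Γ := hst.resolve_left hn
    have hltn : ∀ x ∈ F, x < n := fun x hx => lt_of_le_of_ne (hle x hx) (fun h => hn (h ▸ hx))
    have h1 : hmap k n Γ (Finsupp.single F 1) =
        ((-1 : k) ^ F.card) • Finsupp.single (insert n F) (1 : k) := by
      rw [hmap_single, if_pos ⟨hn, hins⟩]
    have hfiltn : (insert n F).filter (· < n) = F := by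
      ext a
      simp only [Finset.mem_filter, Finset.mem_insert]
      constructor
      · rintro ⟨ha | ha, hlt⟩
        · omega
        · exact ha
      · intro ha; exact ⟨Or.inr ha, hltn a ha⟩
    have hfiltx : ∀ x ∈ F, (insert n F).filter (· < x) = F.filter (· < x) := by
      intro x hx
      ext a
      simp only [Finset.mem_filter, Finset.mem_insert]
      constructor
      · rintro ⟨ha | ha, hlt⟩
        · exfalso; have := hltn x hx; omega
        · exact ⟨ha, hlt⟩
      · rintro ⟨ha, hlt⟩; exact ⟨Or.inr ha, hlt⟩
    rw [h1, map_smul, sBd_single, Finset.sum_insert hn, hfiltn, Finset.erase_insert hn,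
      smul_add, smul_smul, ← mul_pow, neg_mul_neg, one_mul, one_pow, one_smul]
    -- now remaining: single F 1 + (-1)^|F| • ∑ x∈F, ... + hmap(∂ single F) = single F 1
    rw [sBd_single, map_sum]
    have h2 : ∀ x ∈ F, hmap k n Γ (((-1 : k) ^ ((F.filter (· < x)).card)) •
        Finsupp.single (F.erase x) (1 : k)) =
        (((-1 : k) ^ ((F.filter (· < x)).card)) * ((-1 : k) ^ (F.erase x).card)) •
          Finsupp.single (insert n (F.erase x)) (1 : k) := by
      intro x hx
      rw [map_smul, hmap_single, if_pos, smul_smul]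
      refine ⟨fun h => hn (Finset.mem_of_mem_erase h), ?_⟩
      exact hC _ hins _ (Finset.insert_subset_insert n (Finset.erase_subset x F))
    rw [Finset.sum_congr rfl h2, Finset.smul_sum, add_assoc, ← Finset.sum_add_distrib]
    convert add_zero (Finsupp.single F (1 : k))
    refine Finset.sum_eq_zero fun x hx => ?_
    rw [hfiltx x hx, Finset.erase_insert_of_ne (show n ≠ x from fun h => hn (by rw [h]; exact hx)), smul_smul,
      ← add_smul]
    convert zero_smul k _
    have hcard : F.card = (F.erase x).card + 1 := by
      rw [Finset.card_erase_of_mem hx]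
      have : 0 < F.card := Finset.card_pos.2 ⟨x, hx⟩
      omega
    rw [hcard, pow_succ]
    ring

lemma sBd_supported {S S' : Set (Finset ℕ)} (h : ∀ F ∈ S, ∀ x ∈ F, F.erase x ∈ S')
    {p : Finset ℕ →₀ k} (hp : p ∈ Finsupp.supported k k S) :
    sBd k p ∈ Finsupp.supported k k S' := by
  have hle : Finsupp.supported k k S ≤ (Finsupp.supported k k S').comap (sBd k) := by
    rw [Finsupp.supported_eq_span_single, Submodule.span_le]
    rintro _ ⟨F, hF, rfl⟩
    simp only [SetLike.mem_coe, Submodule.mem_comap]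
    rw [sBd_single]
    refine Submodule.sum_mem _ fun x hx => Submodule.smul_mem _ _ ?_
    exact Finsupp.single_mem_supported k 1 (h F hF x hx)
  exact hle hp

lemma hmap_supported {n : ℕ} {Γ : Finset (Finset ℕ)} {S S' : Set (Finset ℕ)}
    (h : ∀ F ∈ S, (n ∉ F ∧ insert n F ∈ Γ) → insert n F ∈ S')
    {p : Finset ℕ →₀ k} (hp : p ∈ Finsupp.supported k k S) :
    hmap k n Γ p ∈ Finsupp.supported k k S' := by
  have hle : Finsupp.supported k k S ≤ (Finsupp.supported k k S').comap (hmap k n Γ) := by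
    rw [Finsupp.supported_eq_span_single, Submodule.span_le]
    rintro _ ⟨F, hF, rfl⟩
    simp only [SetLike.mem_coe, Submodule.mem_comap]
    rw [hmap_single]
    split_ifs with hcond
    · exact Submodule.smul_mem _ _ (Finsupp.single_mem_supported k 1 (h F hF hcond))
    · exact Submodule.zero_mem _
  exact hle hp

lemma homotopy_supported {n : ℕ} {Γ : Finset (Finset ℕ)} (hC : IsComplex Γ)
    (hsub : ∀ F ∈ Γ, F ⊆ Finset.Icc 1 n) {p : Finset ℕ →₀ k}
    (hp : p ∈ Finsupp.supported k k {F | F ∈ Γ ∧ (n ∈ F ∨ insert n F ∈ Γ)}) :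
    sBd k (hmap k n Γ p) + hmap k n Γ (sBd k p) = p := by
  have hle : Finsupp.supported k k {F | F ∈ Γ ∧ (n ∈ F ∨ insert n F ∈ Γ)} ≤
      LinearMap.ker ((sBd k) ∘ₗ (hmap k n Γ) + (hmap k n Γ) ∘ₗ (sBd k) - LinearMap.id) := by
    rw [Finsupp.supported_eq_span_single, Submodule.span_le]
    rintro _ ⟨F, ⟨hF, hst⟩, rfl⟩
    simp only [SetLike.mem_coe, LinearMap.mem_ker, LinearMap.sub_apply, LinearMap.add_apply,
      LinearMap.comp_apply, LinearMap.id_apply, sub_eq_zero]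
    exact homotopy_single k hC hsub hF hst
  have := hle hp
  simp only [LinearMap.mem_ker, LinearMap.sub_apply, LinearMap.add_apply,
    LinearMap.comp_apply, LinearMap.id_apply, sub_eq_zero] at this
  exact this

lemma filter_lt_erase_of_gt {F : Finset ℕ} {x y : ℕ} (hxy : y < x) :
    ((F.erase x).filter (· < y)).card = (F.filter (· < y)).card := by
  rw [Finset.filter_erase, Finset.erase_eq_of_notMem]
  simp only [Finset.mem_filter, not_and, not_lt]
  exact fun _ => hxy.le

lemma filter_lt_erase_of_lt {F : Finset ℕ} {x y : ℕ} (hy : y ∈ F) (hxy : y < x) :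
    ((F.erase y).filter (· < x)).card + 1 = (F.filter (· < x)).card := by
  have hmem : y ∈ F.filter (· < x) := Finset.mem_filter.2 ⟨hy, hxy⟩
  rw [Finset.filter_erase, Finset.card_erase_of_mem hmem]
  have : 0 < (F.filter (· < x)).card := Finset.card_pos.2 ⟨y, hmem⟩
  omega

lemma sBd_sBd_single (F : Finset ℕ) : sBd k (sBd k (Finsupp.single F (1 : k))) = 0 := by
  rw [sBd_single, map_sum]
  have step : ∀ x ∈ F, (sBd k) (((-1 : k) ^ ((F.filter (· < x)).card)) •
      Finsupp.single (F.erase x) (1 : k)) =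
      ∑ y ∈ F.erase x, (((-1 : k) ^ ((F.filter (· < x)).card)) *
        ((-1 : k) ^ (((F.erase x).filter (· < y)).card))) •
        Finsupp.single ((F.erase x).erase y) (1 : k) := by
    intro x _
    rw [map_smul, sBd_single, Finset.smul_sum]
    simp [smul_smul]
  rw [Finset.sum_congr rfl step, Finset.sum_sigma']
  refine Finset.sum_involution (fun p _ => ⟨p.2, p.1⟩) ?_ ?_ ?_ ?_
  · rintro ⟨x, y⟩ hp
    simp only [Finset.mem_sigma, Finset.mem_erase] at hp
    obtain ⟨hx, hyx, hy⟩ := hp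
    have herase : (F.erase x).erase y = (F.erase y).erase x := Finset.erase_right_comm
    simp only [herase]
    rw [← add_smul]
    convert zero_smul k _
    rcases lt_or_gt_of_ne hyx with h | h
    · -- y < x
      obtain ⟨m, hm⟩ : ∃ m, (F.filter (· < x)).card = m + 1 :=
        ⟨((F.erase y).filter (· < x)).card, (filter_lt_erase_of_lt hy h).symm⟩
      rw [filter_lt_erase_of_gt h]
      have h2 : ((F.erase y).filter (· < x)).card = m := by
        have := filter_lt_erase_of_lt hy h; omega
      rw [hm, h2, pow_succ]
      ring
    · -- x < y
      obtain ⟨m, hm⟩ : ∃ m, (F.filter (· < y)).card = m + 1 :=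
        ⟨((F.erase x).filter (· < y)).card, (filter_lt_erase_of_lt hx h).symm⟩
      rw [filter_lt_erase_of_gt h]
      have h2 : ((F.erase x).filter (· < y)).card = m := by
        have := filter_lt_erase_of_lt hx h; omega
      rw [hm, h2, pow_succ]
      ring
  · rintro ⟨x, y⟩ hp _
    simp only [Finset.mem_sigma, Finset.mem_erase] at hp
    intro hcontra
    have : y = x := congrArg Sigma.fst hcontra
    exact hp.2.1 this
  · rintro ⟨x, y⟩ hp
    simp only [Finset.mem_sigma, Finset.mem_erase] at hp ⊢
    exact ⟨hp.2.2, Ne.symm hp.2.1, hp.1⟩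
  · rintro ⟨x, y⟩ _
    rfl

lemma sBd_sBd (p : Finset ℕ →₀ k) : sBd k (sBd k p) = 0 := by
  induction p using Finsupp.induction_linear with
  | zero => simp
  | add f g hf hg => rw [map_add, map_add, hf, hg, add_zero]
  | single a b =>
    have : (Finsupp.single a b : Finset ℕ →₀ k) = b • Finsupp.single a 1 := by
      rw [Finsupp.smul_single', mul_one]
    rw [this, map_smul, map_smul, sBd_sBd_single, smul_zero]

lemma finrank_quot_helper {M : Type} [AddCommGroup M] [Module k M] (N : Submodule k M)
    {ι : Type} [Fintype ι] (g : M →ₗ[k] (ι → k)) (h1 : N ≤ LinearMap.ker g)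
    (h2 : LinearMap.ker g ≤ N) (hsurj : Function.Surjective g) :
    Module.finrank k (M ⧸ N) = Fintype.card ι := by
  have hinj : Function.Injective (Submodule.liftQ N g h1) := by
    rw [← LinearMap.ker_eq_bot (f := Submodule.liftQ N g h1)]
    exact Submodule.ker_liftQ_eq_bot N g h1 h2
  have hsurj' : Function.Surjective (Submodule.liftQ N g h1) := by
    intro f
    obtain ⟨z, hz⟩ := hsurj f
    exact ⟨Submodule.Quotient.mk z, by rw [Submodule.liftQ_apply]; exact hz⟩
  rw [LinearEquiv.finrank_eq (LinearEquiv.ofBijective _ ⟨hinj, hsurj'⟩), Module.finrank_pi]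

set_option maxHeartbeats 2000000 in
lemma betti_shifted {n : ℕ} {Γ : Finset (Finset ℕ)} (hC : IsComplex Γ)
    (hsub : ∀ F ∈ Γ, F ⊆ Finset.Icc 1 n) (hsh : IsShifted Γ n) (c : ℕ) :
    bettiC k Γ c =
      ((Γ.filter fun F => n ∉ F ∧ insert n F ∉ Γ).filter fun F => F.card = c).card := by
  classical
  unfold bettiC
  set U : Finset (Finset ℕ) :=
    (Γ.filter fun F => n ∉ F ∧ insert n F ∉ Γ).filter (fun F => F.card = c) with hUdef
  have hUmem : ∀ u ∈ U, u ∈ Γ ∧ (n ∉ u ∧ insert n u ∉ Γ) ∧ u.card = c := by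
    intro u hu
    simp only [hUdef, Finset.mem_filter] at hu
    tauto
  set st : Set (Finset ℕ) := {F | F ∈ Γ ∧ (n ∈ F ∨ insert n F ∈ Γ)} with hstdef
  have hUnotst : ∀ u ∈ U, u ∉ st := by
    intro u hu hust
    obtain ⟨-, ⟨hn, hins⟩, -⟩ := hUmem u hu
    rcases hust.2 with h | h
    · exact hn h
    · exact hins h
  have herase_st : ∀ F ∈ Γ, ∀ x ∈ F, F.erase x ∈ st := by
    intro F hF x hx
    have hFe : F.erase x ∈ Γ := hC F hF _ (Finset.erase_subset x F)
    refine ⟨hFe, ?_⟩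
    by_cases hxn : x = n
    · subst hxn; right; rw [Finset.insert_erase hx]; exact hF
    · by_cases hnF : n ∈ F
      · left; exact Finset.mem_erase.2 ⟨fun h => hxn h.symm, hnF⟩
      · right
        have hxlt : x < n := lt_of_le_of_ne ((Finset.mem_Icc.1 (hsub F hF hx)).2) hxn
        exact hsh F hF x hx n hxlt le_rfl
  have K1 : ∀ p ∈ Finsupp.supported k k {F : Finset ℕ | F ∈ Γ},
      sBd k p ∈ Finsupp.supported k k st :=
    fun p hp => sBd_supported k (fun F hF x hx => herase_st F hF x hx) hp
  set N := Submodule.comap (cyc k Γ c).subtype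
      (Submodule.map (sBd k) (chainSub k Γ (c + 1))) with hNdef
  set g : ↥(cyc k Γ c) →ₗ[k] (↥U → k) :=
    LinearMap.pi (fun u => (Finsupp.lapply (u : Finset ℕ)) ∘ₗ (cyc k Γ c).subtype) with hgdef
  have hg_apply : ∀ (z : ↥(cyc k Γ c)) (u : ↥U), g z u = (↑z : Finset ℕ →₀ k) (↑u : Finset ℕ) :=
    fun z u => rfl
  have hchain_of : ∀ z : ↥(cyc k Γ c), (↑z : Finset ℕ →₀ k) ∈ chainSub k Γ c :=
    fun z => (Submodule.mem_inf.1 z.2).1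
  have hker_of : ∀ z : ↥(cyc k Γ c), sBd k ↑z = 0 :=
    fun z => (Submodule.mem_inf.1 z.2).2
  have hchain_mono : ∀ z : ↥(cyc k Γ c),
      (↑z : Finset ℕ →₀ k) ∈ Finsupp.supported k k {F : Finset ℕ | F ∈ Γ} :=
    fun z => Finsupp.supported_mono (fun x hx => hx.1) (hchain_of z)
  -- boundaries vanish on U-coordinates
  have hNker : N ≤ LinearMap.ker g := by
    intro z hz
    rw [hNdef, Submodule.mem_comap] at hz
    obtain ⟨w, hw, hwz⟩ := hz
    rw [LinearMap.mem_ker]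
    funext u
    have hsupp : sBd k w ∈ Finsupp.supported k k st :=
      K1 w (Finsupp.supported_mono (fun x hx => hx.1) hw)
    have : (↑z : Finset ℕ →₀ k) (↑u : Finset ℕ) = 0 := by
      have hz' : sBd k w = (↑z : Finset ℕ →₀ k) := hwz
      rw [← hz']
      exact (Finsupp.mem_supported' k _).1 hsupp _ (hUnotst _ u.2)
    rw [Pi.zero_apply, hg_apply, this]
  -- explicit cycles
  have hzc : ∀ u ∈ U, ∃ zu : Finset ℕ →₀ k, zu ∈ cyc k Γ c ∧
      ∀ v ∈ U, zu v = if u = v then (1 : k) else 0 := by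
    intro u hu
    obtain ⟨huΓ, ⟨hun, huins⟩, huc⟩ := hUmem u hu
    set p := sBd k (Finsupp.single u (1 : k)) with hpdef
    have hsingle_mem : (Finsupp.single u (1 : k)) ∈ Finsupp.supported k k
        {F : Finset ℕ | F ∈ Γ ∧ F.card = c} :=
      Finsupp.single_mem_supported k 1 ⟨huΓ, huc⟩
    have hp1 : p ∈ Finsupp.supported k k {F : Finset ℕ | F ∈ Γ ∧ F.card + 1 = c} := by
      refine sBd_supported k ?_ hsingle_mem
      rintro F ⟨hF, hFc⟩ x hx
      refine ⟨hC F hF _ (Finset.erase_subset x F), ?_⟩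
      rw [Finset.card_erase_of_mem hx]
      have : 0 < F.card := Finset.card_pos.2 ⟨x, hx⟩
      omega
    have hpst : p ∈ Finsupp.supported k k st :=
      K1 _ (Finsupp.supported_mono (fun x hx => hx.1) hsingle_mem)
    have ht1 : hmap k n Γ p ∈ chainSub k Γ c := by
      refine hmap_supported k ?_ hp1
      rintro F ⟨hF, hFc⟩ ⟨hnF, hins⟩
      exact ⟨hins, by rw [Finset.card_insert_of_notMem hnF]; omega⟩
    have htn : hmap k n Γ p ∈ Finsupp.supported k k {F : Finset ℕ | n ∈ F} := by
      refine hmap_supported k ?_ hp1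
      intro F _ _
      exact Finset.mem_insert_self n F
    refine ⟨Finsupp.single u 1 - hmap k n Γ p, ?_, ?_⟩
    · refine Submodule.mem_inf.2 ⟨Submodule.sub_mem _ hsingle_mem ht1, ?_⟩
      rw [LinearMap.mem_ker, map_sub]
      have hhom := homotopy_supported k hC hsub hpst
      rw [hpdef] at hhom
      rw [sBd_sBd] at hhom
      rw [map_zero, add_zero] at hhom
      rw [← hpdef] at hhom ⊢
      rw [hhom, sub_self]
    · intro v hv
      obtain ⟨-, ⟨hvn, -⟩, -⟩ := hUmem v hv
      rw [Finsupp.sub_apply, (Finsupp.mem_supported' k _).1 htn v hvn, sub_zero,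
        Finsupp.single_apply]
  -- g is surjective
  have hgsurj : Function.Surjective g := by
    intro f
    choose zu hzu1 hzu2 using hzc
    refine ⟨∑ u ∈ U.attach, f u • (⟨zu u u.2, hzu1 u u.2⟩ : ↥(cyc k Γ c)), ?_⟩
    funext v
    rw [map_sum]
    simp only [Finset.sum_apply, map_smul, Pi.smul_apply, smul_eq_mul]
    rw [Finset.sum_eq_single_of_mem v (Finset.mem_attach U v)]
    · rw [hg_apply, hzu2 v v.2 v v.2, if_pos rfl, mul_one]
    · intro u _ hne
      rw [hg_apply, hzu2 u u.2 v v.2, if_neg, mul_zero]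
      exact fun h => hne (Subtype.ext h)
  -- ker g ≤ N
  have hkerg : LinearMap.ker g ≤ N := by
    intro z hz
    have hz0 : ∀ v ∈ U, (↑z : Finset ℕ →₀ k) v = 0 := by
      intro v hv
      have := congrFun (LinearMap.mem_ker.1 hz) ⟨v, hv⟩
      rw [hg_apply] at this
      exact this
    have hzsupp : (↑z : Finset ℕ →₀ k) ∈ Finsupp.supported k k
        {F : Finset ℕ | F ∈ st ∧ F.card = c} := by
      rw [Finsupp.mem_supported' k]
      intro x hx
      by_cases hxΓ : x ∈ Γ ∧ x.card = c
      · refine hz0 x ?_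
        have hxst : x ∉ st := fun h => hx ⟨h, hxΓ.2⟩
        rw [hstdef] at hxst
        simp only [Set.mem_setOf_eq, not_and, not_or] at hxst
        have := hxst hxΓ.1
        rw [hUdef]
        simp only [Finset.mem_filter]
        exact ⟨⟨hxΓ.1, this.1, this.2⟩, hxΓ.2⟩
      · exact (Finsupp.mem_supported' k _).1 (hchain_of z) x hxΓ
    have h1 : (↑z : Finset ℕ →₀ k) ∈ Finsupp.supported k k st :=
      Finsupp.supported_mono (fun x hx => hx.1) hzsupp
    have h2 := homotopy_supported k hC hsub h1
    rw [hker_of z, map_zero, add_zero] at h2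
    have h3 : hmap k n Γ (↑z : Finset ℕ →₀ k) ∈ chainSub k Γ (c + 1) := by
      refine hmap_supported k ?_ hzsupp
      rintro F ⟨⟨hFΓ, -⟩, hFc⟩ ⟨hnF, hins⟩
      exact ⟨hins, by rw [Finset.card_insert_of_notMem hnF]; omega⟩
    rw [hNdef, Submodule.mem_comap]
    exact ⟨hmap k n Γ ↑z, h3, h2⟩
  -- conclude
  have hfin := finrank_quot_helper k (M := ↥(cyc k Γ c)) N g hNker hkerg hgsurj
  rw [Fintype.card_coe] at hfin
  exact hfin

lemma card_eq_of_counts {A B : Finset (Finset ℕ)} {n : ℕ}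
    (hA : ∀ F ∈ A, F ⊆ Finset.Icc 1 n) (hB : ∀ F ∈ B, F ⊆ Finset.Icc 1 n)
    (h : ∀ c, (A.filter fun F => F.card = c).card = (B.filter fun F => F.card = c).card) :
    A.card = B.card := by
  have hA' : ∀ F ∈ A, F.card ∈ Finset.range (n + 1) := by
    intro F hF
    rw [Finset.mem_range]
    have := Finset.card_le_card (hA F hF)
    rw [Nat.card_Icc] at this
    omega
  have hB' : ∀ F ∈ B, F.card ∈ Finset.range (n + 1) := by
    intro F hF
    rw [Finset.mem_range]
    have := Finset.card_le_card (hB F hF)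
    rw [Nat.card_Icc] at this
    omega
  rw [Finset.card_eq_sum_card_fiberwise hA', Finset.card_eq_sum_card_fiberwise hB']
  exact Finset.sum_congr rfl fun c _ => h c

lemma cone_isComplex {Γ₀ : Finset (Finset ℕ)} {v : ℕ} (h : IsComplex Γ₀)
    (hv : ∀ F ∈ Γ₀, v ∉ F) : IsComplex (cone Γ₀ v) := by
  intro F hF G hGF
  rcases Finset.mem_union.1 hF with hF | hF
  · exact Finset.mem_union_left _ (h F hF G hGF)
  · obtain ⟨F₀, hF₀, rfl⟩ := Finset.mem_image.1 hF
    have hGe : G.erase v ∈ Γ₀ := by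
      refine h F₀ hF₀ _ ?_
      intro x hx
      obtain ⟨hxv, hxG⟩ := Finset.mem_erase.1 hx
      rcases Finset.mem_insert.1 (hGF hxG) with h' | h'
      · exact absurd h' hxv
      · exact h'
    by_cases hvG : v ∈ G
    · exact Finset.mem_union_right _ (Finset.mem_image.2 ⟨G.erase v, hGe, Finset.insert_erase hvG⟩)
    · rw [← Finset.erase_eq_of_notMem hvG]
      exact Finset.mem_union_left _ hGe

lemma U_facet {Γ : Finset (Finset ℕ)} {n : ℕ} (hC : IsComplex Γ)
    (hsub : ∀ F ∈ Γ, F ⊆ Finset.Icc 1 n) (hsh : IsShifted Γ n) {G H : Finset ℕ}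
    (hG : G ∈ Γ) (hGn : n ∉ G) (hGins : insert n G ∉ Γ) (hH : H ∈ Γ) (hGH : G ⊆ H) :
    G = H := by
  by_contra hne
  obtain ⟨x, hxH, hxG⟩ := Finset.exists_of_ssubset (Finset.ssubset_iff_subset_ne.2 ⟨hGH, hne⟩)
  have hGx : insert x G ∈ Γ := hC H hH _ (Finset.insert_subset hxH hGH)
  by_cases hxn : x = n
  · subst hxn; exact hGins hGx
  · have hxlt : x < n := lt_of_le_of_ne ((Finset.mem_Icc.1 (hsub H hH hxH)).2) hxn
    have h2 := hsh _ hGx x (Finset.mem_insert_self x G) n hxlt le_rfl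
    rw [Finset.erase_insert hxG] at h2
    exact hGins h2


end Aux

/-- axiomatization of algebraic shifting: any operation Δ taking complexes on
[n] to shifted complexes on [n] that preserves f-vectors, commutes with coning, is monotone,
and does not decrease the total reduced Betti number, fixes every shifted complex. -/
theorem shifting_axioms_fix_shifted (k : Type) [Field k]
    (Δ : ℕ → Finset (Finset ℕ) → Finset (Finset ℕ))
    (hsh : ∀ n Γ, IsComplex Γ → (∀ F ∈ Γ, F ⊆ Finset.Icc 1 n) →
      IsComplex (Δ n Γ) ∧ (∀ F ∈ Δ n Γ, F ⊆ Finset.Icc 1 n) ∧ IsShifted (Δ n Γ) n)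
    (hf : ∀ n Γ, IsComplex Γ → (∀ F ∈ Γ, F ⊆ Finset.Icc 1 n) →
      ∀ c : ℕ, ((Δ n Γ).filter fun F => F.card = c).card = (Γ.filter fun F => F.card = c).card)
    (hcone : ∀ n Γ, IsComplex Γ → (∀ F ∈ Γ, F ⊆ Finset.Icc 1 n) →
      Δ (n + 1) (cone Γ (n + 1)) = cone (Δ n Γ) (n + 1))
    (hmono : ∀ n Γ Γ', IsComplex Γ → (∀ F ∈ Γ, F ⊆ Finset.Icc 1 n) →
      IsComplex Γ' → (∀ F ∈ Γ', F ⊆ Finset.Icc 1 n) → Γ' ⊆ Γ → Δ n Γ' ⊆ Δ n Γ)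
    (hbetti : ∀ n Γ, IsComplex Γ → (∀ F ∈ Γ, F ⊆ Finset.Icc 1 n) →
      ∑ c ∈ Finset.Icc 1 (n + 1), bettiC k Γ c ≤ ∑ c ∈ Finset.Icc 1 (n + 1), bettiC k (Δ n Γ) c) :
    ∀ n Γ, IsComplex Γ → (∀ F ∈ Γ, F ⊆ Finset.Icc 1 n) → IsShifted Γ n →
      Δ n Γ = Γ := by
  intro n
  induction n using Nat.strong_induction_on with
  | _ n ihn =>
  intro Γ
  induction Γ using Finset.strongInduction with
  | _ Γ ihΓ =>
  intro hC hsub hshift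
  obtain ⟨hΔC, hΔsub, hΔsh⟩ := hsh n Γ hC hsub
  have hfv := hf n Γ hC hsub
  have hcard : (Δ n Γ).card = Γ.card := card_eq_of_counts hΔsub hsub hfv
  by_cases hΓe : Γ = ∅
  · subst hΓe
    rw [Finset.card_empty] at hcard
    exact Finset.card_eq_zero.1 hcard
  have hne : Γ.Nonempty := Finset.nonempty_iff_ne_empty.2 hΓe
  have hempty_mem : ∅ ∈ Γ := hC _ hne.choose_spec ∅ (Finset.empty_subset _)
  by_cases hU : ∃ F ∈ Γ, n ∉ F ∧ insert n F ∉ Γ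
  · -- CASE B : there is a face in the "antibase"
    obtain ⟨F, hFU, hFmin⟩ := Finset.exists_min_image
      (Γ.filter fun H => n ∉ H ∧ insert n H ∉ Γ) (fun H => ∑ x ∈ H, x)
      (by obtain ⟨F, h1, h2, h3⟩ := hU; exact ⟨F, Finset.mem_filter.2 ⟨h1, h2, h3⟩⟩)
    rw [Finset.mem_filter] at hFU
    obtain ⟨hFΓ, hFn, hFins⟩ := hFU
    have hfacetF : ∀ H ∈ Γ, F ⊆ H → F = H :=
      fun H hH hFH => U_facet hC hsub hshift hFΓ hFn hFins hH hFH
    set Γ' := Γ.erase F with hΓ'def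
    have hΓ'C : IsComplex Γ' := by
      intro H hH G hGH
      have hHΓ : H ∈ Γ := Finset.mem_of_mem_erase hH
      refine Finset.mem_erase.2 ⟨?_, hC H hHΓ G hGH⟩
      rintro rfl
      exact (Finset.mem_erase.1 hH).1 (hfacetF H hHΓ hGH).symm
    have hΓ'sub : ∀ G ∈ Γ', G ⊆ Finset.Icc 1 n := fun G hG => hsub G (Finset.mem_of_mem_erase hG)
    have hΓ'sh : IsShifted Γ' n := by
      intro H hH i hi j hij hjn
      have hHΓ : H ∈ Γ := Finset.mem_of_mem_erase hH
      have hS : insert j (H.erase i) ∈ Γ := hshift H hHΓ i hi j hij hjn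
      refine Finset.mem_erase.2 ⟨?_, hS⟩
      intro hSF
      by_cases hjH : j ∈ H
      · have hins : insert j (H.erase i) = H.erase i :=
          Finset.insert_eq_self.2 (Finset.mem_erase.2 ⟨Nat.ne_of_gt hij, hjH⟩)
        rw [hins] at hSF
        have hFH : F ⊆ H := hSF ▸ Finset.erase_subset i H
        have hFeq := hfacetF H hHΓ hFH
        have hiF : i ∉ F := by rw [← hSF]; exact Finset.notMem_erase i H
        rw [hFeq] at hiF
        exact hiF hi
      · have hiF : i ∉ F := by
          rw [← hSF]
          simp only [Finset.mem_insert, not_or]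
          exact ⟨Nat.ne_of_lt hij, Finset.notMem_erase i H⟩
        have hjF : j ∈ F := by rw [← hSF]; exact Finset.mem_insert_self j _
        have hjHe : j ∉ H.erase i := fun hc => hjH (Finset.mem_of_mem_erase hc)
        have hHF : H = insert i (F.erase j) := by
          rw [← hSF, Finset.erase_insert hjHe, Finset.insert_erase hi]
        have hin : i < n := lt_of_lt_of_le hij hjn
        have hHn : n ∉ H := by
          rw [hHF]
          simp only [Finset.mem_insert, not_or]
          refine ⟨fun hc => by omega, fun hc => hFn (Finset.mem_of_mem_erase hc)⟩
        have hHins : insert n H ∉ Γ := by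
          intro hcon
          have h2 := hshift _ hcon i (Finset.mem_insert_of_mem hi) j hij hjn
          have heq : insert j ((insert n H).erase i) = insert n F := by
            rw [Finset.erase_insert_of_ne (show n ≠ i by omega), Finset.insert_comm, hSF]
          rw [heq] at h2
          exact hFins h2
        have hHUmem : H ∈ Γ.filter fun H => n ∉ H ∧ insert n H ∉ Γ :=
          Finset.mem_filter.2 ⟨hHΓ, hHn, hHins⟩
        have hsumle := hFmin H hHUmem
        have hiFe : i ∉ F.erase j := fun hc => hiF (Finset.mem_of_mem_erase hc)
        have hsumH : (∑ x ∈ H, x) = i + ∑ x ∈ F.erase j, x := by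
          rw [hHF, Finset.sum_insert hiFe]
        have hsumF : (∑ x ∈ F, x) = j + ∑ x ∈ F.erase j, x :=
          (Finset.add_sum_erase F id hjF).symm
        omega
    have hΓ'ss : Γ' ⊂ Γ := Finset.erase_ssubset hFΓ
    have hIH' : Δ n Γ' = Γ' := ihΓ Γ' hΓ'ss hΓ'C hΓ'sub hΓ'sh
    have hmono' : Γ' ⊆ Δ n Γ := by
      rw [← hIH']
      exact hmono n Γ Γ' hC hsub hΓ'C hΓ'sub (Finset.erase_subset F Γ)
    have hΓins : insert F Γ' = Γ := Finset.insert_erase hFΓ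
    have hcard' : ((Δ n Γ) \ Γ').card = 1 := by
      rw [Finset.card_sdiff_of_subset hmono', hcard, hΓ'def, Finset.card_erase_of_mem hFΓ]
      have := Finset.card_pos.2 ⟨F, hFΓ⟩
      omega
    obtain ⟨G, hG1⟩ := Finset.card_eq_one.1 hcard'
    have hGdef : Δ n Γ = insert G Γ' := by
      rw [← Finset.sdiff_union_of_subset hmono', hG1, ← Finset.insert_eq]
    have hGnot : G ∉ Γ' := by
      have : G ∈ (Δ n Γ) \ Γ' := by rw [hG1]; exact Finset.mem_singleton_self G
      exact (Finset.mem_sdiff.1 this).2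
    have hGcard : G.card = F.card := by
      have h1 := hfv G.card
      rw [hGdef, ← hΓins, Finset.filter_insert, Finset.filter_insert, if_pos rfl,
        Finset.card_insert_of_notMem (fun hc => hGnot (Finset.mem_filter.1 hc).1)] at h1
      by_cases hFc : F.card = G.card
      · exact hFc.symm
      · rw [if_neg hFc] at h1
        omega
    by_cases hGF : G = F
    · rw [hGdef, hGF, hΓ'def, Finset.insert_erase hFΓ]
    exfalso
    have hGΓ : G ∉ Γ := by
      intro hGΓ
      exact hGnot (Finset.mem_erase.2 ⟨hGF, hGΓ⟩)
    have hFne : F ≠ ∅ := by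
      rintro rfl
      exact hGF (Finset.card_eq_zero.1 (hGcard.trans Finset.card_empty))
    have hF1 : 1 ≤ F.card := Finset.card_pos.2 (Finset.nonempty_iff_ne_empty.2 hFne)
    have hn1 : 1 ≤ n := by
      obtain ⟨x, hx⟩ := Finset.nonempty_iff_ne_empty.2 hFne
      have := Finset.mem_Icc.1 (hsub F hFΓ hx)
      omega
    -- the minimal cone over Γ with apex n
    set S0 := Γ.image (fun H => H.erase n) with hS0def
    have hS0sub : ∀ H ∈ S0, H ⊆ Finset.Icc 1 (n - 1) := by
      intro H hH
      obtain ⟨H', hH', rfl⟩ := Finset.mem_image.1 hH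
      intro x hx
      obtain ⟨hxn, hxH'⟩ := Finset.mem_erase.1 hx
      have := Finset.mem_Icc.1 (hsub H' hH' hxH')
      rw [Finset.mem_Icc]
      omega
    have hS0n : ∀ H ∈ S0, n ∉ H := by
      intro H hH hc
      have := Finset.mem_Icc.1 (hS0sub H hH hc)
      omega
    have hS0C : IsComplex S0 := by
      intro H hH G' hG'H
      obtain ⟨H', hH', rfl⟩ := Finset.mem_image.1 hH
      have hG'Γ : G' ∈ Γ := hC H' hH' G' (hG'H.trans (Finset.erase_subset n H'))
      have hnG' : n ∉ G' := fun hc => Finset.notMem_erase n H' (hG'H hc)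
      exact Finset.mem_image.2 ⟨G', hG'Γ, Finset.erase_eq_of_notMem hnG'⟩
    have hS0sh : IsShifted S0 (n - 1) := by
      intro H hH i hi j hij hjn
      obtain ⟨H', hH', rfl⟩ := Finset.mem_image.1 hH
      have hiH' : i ∈ H' := Finset.mem_of_mem_erase hi
      have hjn' : j ≤ n := by omega
      have hS : insert j (H'.erase i) ∈ Γ := hshift H' hH' i hiH' j hij hjn'
      refine Finset.mem_image.2 ⟨insert j (H'.erase i), hS, ?_⟩
      rw [Finset.erase_insert_of_ne (show j ≠ n by omega)]
      congr 1
      rw [Finset.erase_right_comm]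
    have hS0fix : Δ (n - 1) S0 = S0 := ihn (n - 1) (by omega) S0 hS0C hS0sub hS0sh
    have hCnC : IsComplex (cone S0 n) := cone_isComplex hS0C hS0n
    have hCnsub : ∀ H ∈ cone S0 n, H ⊆ Finset.Icc 1 n := by
      intro H hH
      rcases Finset.mem_union.1 hH with h | h
      · exact (hS0sub H h).trans (Finset.Icc_subset_Icc le_rfl (by omega))
      · obtain ⟨H₀, hH₀, rfl⟩ := Finset.mem_image.1 h
        intro x hx
        rcases Finset.mem_insert.1 hx with rfl | hx'
        · exact Finset.mem_Icc.2 ⟨hn1, le_rfl⟩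
        · exact (hS0sub H₀ hH₀).trans (Finset.Icc_subset_Icc le_rfl (by omega)) hx'
    have hΓCn : Γ ⊆ cone S0 n := by
      intro H hH
      by_cases hn : n ∈ H
      · exact Finset.mem_union_right _ (Finset.mem_image.2
          ⟨H.erase n, Finset.mem_image.2 ⟨H, hH, rfl⟩, Finset.insert_erase hn⟩)
      · exact Finset.mem_union_left _ (Finset.mem_image.2 ⟨H, hH, Finset.erase_eq_of_notMem hn⟩)
    have hCnfix : Δ n (cone S0 n) = cone S0 n := by
      have hc := hcone (n - 1) S0 hS0C hS0sub
      rw [hS0fix] at hc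
      have hnn : n - 1 + 1 = n := by omega
      rw [hnn] at hc
      exact hc
    have hGCn : G ∈ cone S0 n := by
      have hmm := hmono n (cone S0 n) Γ hCnC hCnsub hC hsub hΓCn
      rw [hCnfix] at hmm
      refine hmm ?_
      rw [hGdef]
      exact Finset.mem_insert_self G Γ'
    have hnG : n ∈ G := by
      by_contra hnG
      rcases Finset.mem_union.1 hGCn with h | h
      · obtain ⟨H, hH, hHG⟩ := Finset.mem_image.1 h
        exact hGΓ (hC H hH G (hHG ▸ Finset.erase_subset n H))
      · obtain ⟨H, hH, hHG⟩ := Finset.mem_image.1 h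
        exact hnG (hHG ▸ Finset.mem_insert_self n H)
    set K := G.erase n with hKdef
    have hKeq : insert n K = G := by rw [hKdef, Finset.insert_erase hnG]
    set W := Γ.filter (fun H => n ∉ H ∧ insert n H ∉ Γ) with hWdef
    have hUeq : (Δ n Γ).filter (fun H => n ∉ H ∧ insert n H ∉ (Δ n Γ)) =
        (W.erase F).erase K := by
      ext H
      simp only [Finset.mem_filter, Finset.mem_erase, hWdef]
      constructor
      · rintro ⟨hHmem, hHn, hHins⟩
        rw [hGdef] at hHmem hHins
        have hHne : H ≠ G := fun h => hHn (h ▸ hnG)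
        have hHΓ' : H ∈ Γ' := (Finset.mem_insert.1 hHmem).resolve_left hHne
        have hHΓ : H ∈ Γ := Finset.mem_of_mem_erase hHΓ'
        have hHF : H ≠ F := (Finset.mem_erase.1 hHΓ').1
        have hinsΓ : insert n H ∉ Γ := by
          intro hcon
          apply hHins
          refine Finset.mem_insert_of_mem (Finset.mem_erase.2 ⟨?_, hcon⟩)
          intro hc
          exact hFn (hc ▸ Finset.mem_insert_self n H)
        have hHK : H ≠ K := by
          intro hc
          apply hHins
          rw [hc, hKeq]
          exact Finset.mem_insert_self G Γ'
        exact ⟨hHK, hHF, hHΓ, hHn, hinsΓ⟩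
      · rintro ⟨hHK, hHF, hHΓ, hHn, hHins⟩
        rw [hGdef]
        refine ⟨Finset.mem_insert_of_mem (Finset.mem_erase.2 ⟨hHF, hHΓ⟩), hHn, ?_⟩
        intro hcon
        rcases Finset.mem_insert.1 hcon with h | h
        · apply hHK
          rw [hKdef, ← h, Finset.erase_insert hHn]
        · exact hHins (Finset.mem_of_mem_erase h)
    have hb := hbetti n Γ hC hsub
    have e1 : ∀ c, bettiC k Γ c = (W.filter fun H => H.card = c).card :=
      fun c => betti_shifted k hC hsub hshift c
    have e2 : ∀ c, bettiC k (Δ n Γ) c =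
        (((W.erase F).erase K).filter fun H => H.card = c).card := by
      intro c
      rw [betti_shifted k hΔC hΔsub hΔsh c, hUeq]
    rw [Finset.sum_congr rfl (fun c _ => e1 c), Finset.sum_congr rfl (fun c _ => e2 c)] at hb
    have hWsub : ∀ c : ℕ, (((W.erase F).erase K).filter fun H => H.card = c) ⊆
        (W.filter fun H => H.card = c) :=
      fun c => Finset.filter_subset_filter _
        (fun x hx => Finset.mem_of_mem_erase (Finset.mem_of_mem_erase hx))
    have hlt : ∑ c ∈ Finset.Icc 1 (n + 1), (((W.erase F).erase K).filter fun H => H.card = c).card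
        < ∑ c ∈ Finset.Icc 1 (n + 1), (W.filter fun H => H.card = c).card := by
      apply Finset.sum_lt_sum
      · intro c _
        exact Finset.card_le_card (hWsub c)
      · refine ⟨F.card, ?_, ?_⟩
        · rw [Finset.mem_Icc]
          have := Finset.card_le_card (hsub F hFΓ)
          rw [Nat.card_Icc] at this
          omega
        · apply Finset.card_lt_card
          rw [Finset.ssubset_iff_of_subset (hWsub F.card)]
          refine ⟨F, Finset.mem_filter.2 ⟨Finset.mem_filter.2 ⟨hFΓ, hFn, hFins⟩, rfl⟩, ?_⟩
          intro hc
          exact (Finset.mem_erase.1 (Finset.mem_of_mem_erase (Finset.mem_filter.1 hc).1)).1 rfl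
    omega
  · -- CASE A : cone over apex n
    push_neg at hU
    have hn1 : 1 ≤ n := by
      have h1 := hU ∅ hempty_mem (Finset.notMem_empty n)
      have := Finset.mem_Icc.1 (hsub _ h1 (Finset.mem_insert_self n ∅))
      omega
    set Γ₀ := Γ.filter (fun F => n ∉ F) with hΓ₀def
    have hΓ₀C : IsComplex Γ₀ := by
      intro H hH G hGH
      obtain ⟨hHΓ, hHn⟩ := Finset.mem_filter.1 hH
      exact Finset.mem_filter.2 ⟨hC H hHΓ G hGH, fun hc => hHn (hGH hc)⟩
    have hΓ₀sub : ∀ H ∈ Γ₀, H ⊆ Finset.Icc 1 (n - 1) := by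
      intro H hH x hx
      obtain ⟨hHΓ, hHn⟩ := Finset.mem_filter.1 hH
      have := Finset.mem_Icc.1 (hsub H hHΓ hx)
      have hxn : x ≠ n := fun hc => hHn (hc ▸ hx)
      rw [Finset.mem_Icc]
      omega
    have hΓ₀sh : IsShifted Γ₀ (n - 1) := by
      intro H hH i hi j hij hjn
      obtain ⟨hHΓ, hHn⟩ := Finset.mem_filter.1 hH
      have hS : insert j (H.erase i) ∈ Γ := hshift H hHΓ i hi j hij (by omega)
      refine Finset.mem_filter.2 ⟨hS, ?_⟩
      simp only [Finset.mem_insert, not_or]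
      exact ⟨by omega, fun hc => hHn (Finset.mem_of_mem_erase hc)⟩
    have hΓcone : cone Γ₀ n = Γ := by
      ext H
      rw [cone, Finset.mem_union]
      constructor
      · rintro (h | h)
        · exact (Finset.mem_filter.1 h).1
        · obtain ⟨H₀, hH₀, rfl⟩ := Finset.mem_image.1 h
          obtain ⟨h1, h2⟩ := Finset.mem_filter.1 hH₀
          exact hU H₀ h1 h2
      · intro hH
        by_cases hn : n ∈ H
        · refine Or.inr (Finset.mem_image.2 ⟨H.erase n, ?_, Finset.insert_erase hn⟩)
          exact Finset.mem_filter.2 ⟨hC H hH _ (Finset.erase_subset n H), Finset.notMem_erase n H⟩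
        · exact Or.inl (Finset.mem_filter.2 ⟨hH, hn⟩)
    have hfix : Δ (n - 1) Γ₀ = Γ₀ := ihn (n - 1) (by omega) Γ₀ hΓ₀C hΓ₀sub hΓ₀sh
    have hc := hcone (n - 1) Γ₀ hΓ₀C hΓ₀sub
    rw [hfix] at hc
    have hnn : n - 1 + 1 = n := by omega
    rw [hnn] at hc
    rw [← hΓcone]
    exact hc
end

section
/- Let L be the universal squarefree lexsegment ideal with k_i minimal generators in degree i, and set R_j = j + k_1 + ⋯ + k_j. Then the set of minimal generators of L in degree r is exactly { x_{R_1} x_{R_2} ⋯ x_{R_{r-1}} · x_l : R_{r-1}+1 ≤ l ≤ R_r − 1 }. -/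
/-- Monomials in the variables x_i (i ≥ 1) are modelled as multisets of variable indices;
`m ≤ m'` (multiset inclusion) is divisibility.  `monLexGT m m'` says m >_lex m' in the
lexicographic order on monomials of S (smaller variable indices are lex-larger). -/
def monLexGT (m m' : Multiset ℕ) : Prop :=
  List.Lex (· < ·) (m.sort (· ≤ ·)) (m'.sort (· ≤ ·))

/-- m >_grlex m' in the graded lexicographic order (lower degree monomials are larger). -/
def gradedLexGT (m m' : Multiset ℕ) : Prop :=
  Multiset.card m < Multiset.card m' ∨
    (Multiset.card m = Multiset.card m' ∧ monLexGT m m')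

/-- A set of monomials forms a monomial ideal iff it is upward closed under divisibility. -/
def IsMonIdeal (I : Set (Multiset ℕ)) : Prop :=
  ∀ m ∈ I, ∀ m' : Multiset ℕ, m ≤ m' → m' ∈ I

/-- The minimal generators of a monomial ideal: monomials of I not properly divisible by
a monomial of I. -/
def minGen (I : Set (Multiset ℕ)) : Set (Multiset ℕ) :=
  {m ∈ I | ∀ m' ∈ I, m' ≤ m → m' = m}

/-- The monomial ideal generated by a set of monomials. -/
def idealGen (G : Set (Multiset ℕ)) : Set (Multiset ℕ) :=
  {m | ∃ g ∈ G, g ≤ m}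

/-- A universal squarefree lexsegment ideal (USLI): a squarefree monomial ideal of
S = k[x_i : i ∈ ℕ], finitely generated in each degree, such that together with any
monomial it contains every lex-larger squarefree monomial of the same degree. -/
def IsUSLI (L : Set (Multiset ℕ)) : Prop :=
  IsMonIdeal L ∧
  (∀ m ∈ minGen L, m.Nodup ∧ ∀ x ∈ m, 1 ≤ x) ∧
  (∀ d : ℕ, {m ∈ minGen L | Multiset.card m = d}.Finite) ∧
  (∀ m ∈ L, ∀ m' : Multiset ℕ, m'.Nodup → (∀ x ∈ m', 1 ≤ x) →
    Multiset.card m' = Multiset.card m → monLexGT m' m → m' ∈ L)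

/-- A squarefree strongly stable monomial ideal: all minimal generators are squarefree
(in positive variables), and exchanging a variable of a minimal generator for a smaller
missing one stays in the ideal. -/
def IsSqStable (I : Set (Multiset ℕ)) : Prop :=
  IsMonIdeal I ∧
  (∀ m ∈ minGen I, m.Nodup ∧ ∀ x ∈ m, 1 ≤ x) ∧
  (∀ m ∈ minGen I, ∀ i j : ℕ, 1 ≤ i → i < j → j ∈ m → i ∉ m →
    (i ::ₘ m.erase j) ∈ I)

/-- The largest variable index dividing a monomial. -/
def maxVar (u : Multiset ℕ) : ℕ := u.toFinset.sup id


open List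

namespace USLI7

theorem lt_iff {l l' : List ℕ} : l < l' ↔ List.Lex (· < ·) l l' := Iff.rfl

theorem lex_append_iff {s t : List ℕ} (h : s.length = t.length) {a b : ℕ} :
    (s ++ [a]) < (t ++ [b]) ↔ s < t ∨ (s = t ∧ a < b) := by
  induction s generalizing t with
  | nil =>
    cases t with
    | nil => simp [lt_iff]
    | cons c t => simp at h
  | cons x s ih =>
    cases t with
    | nil => simp at h
    | cons y t =>
      simp only [List.cons_append, lt_iff] at *
      constructor
      · intro hl
        cases hl with
        | rel h' => exact Or.inl (List.Lex.rel h')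
        | cons h' =>
          rcases (ih (by simpa using h)).1 h' with h'' | ⟨rfl, h''⟩
          · exact Or.inl (List.Lex.cons h'')
          · exact Or.inr ⟨rfl, h''⟩
      · rintro (hl | ⟨he, hab⟩)
        · cases hl with
          | rel h' => exact List.Lex.rel h'
          | cons h' => exact List.Lex.cons ((ih (by simpa using h)).2 (Or.inl h'))
        · rw [List.cons.injEq] at he
          obtain ⟨rfl, rfl⟩ := he
          exact List.Lex.cons ((ih rfl).2 (Or.inr ⟨rfl, hab⟩))

theorem cons_le_cons_iff {a : ℕ} {u v : List ℕ} : (a :: u) ≤ (a :: v) ↔ u ≤ v := by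
  rw [le_iff_lt_or_eq, le_iff_lt_or_eq, lt_iff, lt_iff, List.lex_cons_iff, List.cons.injEq, eq_self_iff_true, true_and]

theorem cons_dropLast_le : ∀ (s : List ℕ), s ≠ [] → s.Pairwise (· ≤ ·) → ∀ a : ℕ,
    (∀ b ∈ s, a ≤ b) → (a :: s.dropLast) ≤ s
  | [], h, _, _, _ => absurd rfl h
  | [b], _, _, a, hab => by
      have : a ≤ b := hab b (by simp)
      rcases this.lt_or_eq with h | h
      · exact le_of_lt (lt_iff.2 (List.Lex.rel h))
      · simp [h, List.dropLast]
  | b :: c :: t, _, hs, a, hab => by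
      have hab' : a ≤ b := hab b (by simp)
      have hs' : (c :: t).Pairwise (· ≤ ·) := hs.of_cons
      have hbc : ∀ x ∈ c :: t, b ≤ x := fun x hx => (List.pairwise_cons.1 hs).1 x hx
      have hdl : (b :: c :: t).dropLast = b :: (c :: t).dropLast := rfl
      rw [hdl]
      rcases hab'.lt_or_eq with h | rfl
      · exact le_of_lt (lt_iff.2 (List.Lex.rel h))
      · exact cons_le_cons_iff.2 (cons_dropLast_le (c :: t) (by simp) hs' a hbc)

theorem dropLast_le_of_sublist : ∀ {s t : List ℕ}, t <+ s → t.length + 1 = s.length →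
    s.Pairwise (· ≤ ·) → s.dropLast ≤ t := by
  intro s
  induction s with
  | nil => intro t h hl; simp at hl
  | cons a s' ih =>
    intro t h hl hs
    cases h with
    | cons _a h' =>
      have hlen : t.length = s'.length := by simpa using hl
      have : t = s' := List.Sublist.eq_of_length h' hlen
      subst this
      cases t with
      | nil => simp
      | cons c u =>
        have : (a :: c :: u).dropLast = a :: (c :: u).dropLast := rfl
        rw [this]
        exact cons_dropLast_le (c :: u) (by simp) hs.of_cons a
          (fun x hx => (List.pairwise_cons.1 hs).1 x hx)
    | @cons_cons t' _ _ h' =>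
      have hs' : s'.Pairwise (· ≤ ·) := hs.of_cons
      have hlen : t'.length + 1 = s'.length := by simpa using hl
      have hne : s' ≠ [] := by
        intro hc; rw [hc] at hlen; simp at hlen
      have : (a :: s').dropLast = a :: s'.dropLast := by
        cases s' with
        | nil => exact absurd rfl hne
        | cons c u => rfl
      rw [this]
      exact cons_le_cons_iff.2 (ih h' hlen hs')

end USLI7

open List

namespace USLI7

/-- abbreviation: squarefree positive monomial of degree d -/
def InS (d : ℕ) (m : Multiset ℕ) : Prop :=
  m.Nodup ∧ (∀ x ∈ m, 1 ≤ x) ∧ Multiset.card m = d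

theorem sort_coe {l : List ℕ} (h : l.Pairwise (· ≤ ·)) : Multiset.sort (↑l) (· ≤ ·) = l :=
  List.Perm.eq_of_pairwise' (Multiset.pairwise_sort _ _) h
    (Multiset.coe_eq_coe.1 (Multiset.sort_eq _ _))

theorem coe_sort (m : Multiset ℕ) : (↑(Multiset.sort m (· ≤ ·)) : Multiset ℕ) = m :=
  Multiset.sort_eq _ _

theorem sort_nodup {m : Multiset ℕ} (h : m.Nodup) : (Multiset.sort m (· ≤ ·)).Nodup := by
  rw [← Multiset.coe_nodup, coe_sort]; exact h

theorem length_sort (m : Multiset ℕ) :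
    (Multiset.sort m (· ≤ ·)).length = Multiset.card m :=
  Multiset.length_sort _

theorem sort_pairwise_lt {m : Multiset ℕ} (h : m.Nodup) :
    (Multiset.sort m (· ≤ ·)).Pairwise (· < ·) := by
  have h1 : (Multiset.sort m (· ≤ ·)).Pairwise (· ≤ ·) := Multiset.pairwise_sort _ _
  have h2 : (Multiset.sort m (· ≤ ·)).Pairwise (· ≠ ·) := sort_nodup h
  exact (h1.and h2).imp (fun hab => lt_of_le_of_ne hab.1 hab.2)

theorem sort_sublist_of_le {m' m : Multiset ℕ} (h : m' ≤ m) :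
    Multiset.sort m' (· ≤ ·) <+ Multiset.sort m (· ≤ ·) := by
  have hle : (↑(Multiset.sort m' (· ≤ ·)) : Multiset ℕ) ≤ ↑(Multiset.sort m (· ≤ ·)) := by
    rw [coe_sort, coe_sort]; exact h
  obtain ⟨u, hperm, hsub⟩ := Multiset.coe_le.1 hle
  have hu : u.Pairwise (· ≤ ·) := (Multiset.pairwise_sort m _).sublist hsub
  rwa [List.Perm.eq_of_pairwise' hu (Multiset.pairwise_sort _ _) hperm] at hsub

theorem coe_le_of_sublist {l l' : List ℕ} (h : l <+ l') : (↑l : Multiset ℕ) ≤ ↑l' :=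
  Multiset.coe_le.2 h.subperm

theorem exists_le_card (s : Multiset ℕ) {n : ℕ} (h : n ≤ Multiset.card s) :
    ∃ u, u ≤ s ∧ Multiset.card u = n := by
  refine ⟨↑(s.toList.take n), ?_, ?_⟩
  · have : (↑(s.toList.take n) : Multiset ℕ) ≤ ↑s.toList := coe_le_of_sublist (List.take_sublist _ _)
    rwa [Multiset.coe_toList] at this
  · rw [Multiset.coe_card, List.length_take, Multiset.length_toList]
    omega

theorem exists_divisor_card {m' m : Multiset ℕ} (h : m' ≤ m) {n : ℕ}
    (h1 : Multiset.card m' ≤ n) (h2 : n ≤ Multiset.card m) :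
    ∃ t, m' ≤ t ∧ t ≤ m ∧ Multiset.card t = n := by
  obtain ⟨u, hu, hcard⟩ := exists_le_card (m - m') (n := n - Multiset.card m')
    (by rw [Multiset.card_sub h]; omega)
  refine ⟨m' + u, Multiset.le_add_right _ _, ?_, ?_⟩
  · calc m' + u ≤ m' + (m - m') := add_le_add_right hu _
    _ = m := add_tsub_cancel_of_le h
  · rw [Multiset.card_add, hcard]; omega

end USLI7

namespace USLI7

/-- The sorted list [R 1, ..., R d]. -/
def V (R : ℕ → ℕ) (d : ℕ) : List ℕ := (List.range d).map (fun i => R (i + 1))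

theorem V_length (R : ℕ → ℕ) (d : ℕ) : (V R d).length = d := by simp [V]

theorem V_succ (R : ℕ → ℕ) (d : ℕ) : V R (d + 1) = V R d ++ [R (d + 1)] := by
  simp [V, List.range_succ]


theorem coe_append_singleton (l : List ℕ) (a : ℕ) :
    (↑(l ++ [a]) : Multiset ℕ) = a ::ₘ (↑l : Multiset ℕ) := by
  rw [Multiset.cons_coe, Multiset.coe_eq_coe]
  exact List.perm_append_singleton a l

section Rfacts

variable {k R : ℕ → ℕ} (hR : ∀ j, R j = j + ∑ i ∈ Finset.Icc 1 j, k i)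
include hR

theorem R_zero : R 0 = 0 := by simpa using hR 0

theorem R_succ (e : ℕ) : R (e + 1) = R e + 1 + k (e + 1) := by
  rw [hR, hR, Finset.sum_Icc_succ_top (by omega : 1 ≤ e + 1)]
  omega

theorem R_ge (j : ℕ) : j ≤ R j := by rw [hR]; omega

theorem R_strictMono : StrictMono R := by
  apply strictMono_nat_of_lt_succ
  intro n
  rw [R_succ hR]
  omega

theorem V_pairwise (d : ℕ) : (V R d).Pairwise (· < ·) := by
  unfold V
  refine List.Pairwise.map _ (fun a b hab => ?_) List.pairwise_lt_range
  exact R_strictMono hR (by omega)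

theorem V_sorted (d : ℕ) : (V R d).Pairwise (· ≤ ·) := (V_pairwise hR d).imp le_of_lt

theorem V_nodup (d : ℕ) : (V R d).Nodup := (V_pairwise hR d).imp ne_of_lt

theorem V_mem_le {d x : ℕ} (hx : x ∈ V R d) : 1 ≤ x ∧ x ≤ R d := by
  obtain ⟨i, hi, rfl⟩ := List.mem_map.1 hx
  rw [List.mem_range] at hi
  constructor
  · have := R_ge hR (i + 1); omega
  · rcases Nat.lt_or_ge (i+1) d with h | h
    · exact le_of_lt (R_strictMono hR h)
    · have : i + 1 = d := by omega
      rw [this]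

/-- the list V R e ++ [l] is sorted, for R e < l -/
theorem V_append_pairwise {e l : ℕ} (hl : R e < l) : (V R e ++ [l]).Pairwise (· < ·) := by
  rw [List.pairwise_append]
  refine ⟨V_pairwise hR e, by simp, ?_⟩
  intro x hx y hy
  rw [List.mem_singleton] at hy
  subst hy
  exact lt_of_le_of_lt (V_mem_le hR hx).2 hl

/-- the monomial l ::ₘ V R e, for R e < l -/
theorem mk_mem {e l : ℕ} (hl : R e < l) :
    InS (e + 1) (l ::ₘ (↑(V R e) : Multiset ℕ)) ∧
    Multiset.sort (l ::ₘ (↑(V R e) : Multiset ℕ)) (· ≤ ·) = V R e ++ [l] := by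
  have hco : (l ::ₘ (↑(V R e) : Multiset ℕ)) = ↑(V R e ++ [l]) := by
    rw [coe_append_singleton]
  have hpw := V_append_pairwise hR hl
  have hsorted : (V R e ++ [l]).Pairwise (· ≤ ·) := hpw.imp le_of_lt
  have hsort : Multiset.sort (l ::ₘ (↑(V R e) : Multiset ℕ)) (· ≤ ·) = V R e ++ [l] := by
    rw [hco, sort_coe hsorted]
  refine ⟨⟨?_, ?_, ?_⟩, hsort⟩
  · rw [hco, Multiset.coe_nodup]
    exact hpw.imp ne_of_lt
  · intro x hx
    rw [hco, Multiset.mem_coe, List.mem_append] at hx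
    rcases hx with hx | hx
    · exact (V_mem_le hR hx).1
    · rw [List.mem_singleton] at hx; subst hx
      have := R_ge hR e; omega
  · rw [hco, Multiset.coe_card, List.length_append, V_length]; simp

/-- decomposition: if dropLast (sort m) = V R e then m = l ::ₘ V R e with R e < l. -/
theorem decompose {e : ℕ} {m : Multiset ℕ} (hm : InS (e + 1) m)
    (hd : (Multiset.sort m (· ≤ ·)).dropLast = V R e) :
    ∃ l, R e < l ∧ Multiset.sort m (· ≤ ·) = V R e ++ [l] ∧
      m = l ::ₘ (↑(V R e) : Multiset ℕ) := by
  obtain ⟨hnd, hpos, hcard⟩ := hm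
  have hne : Multiset.sort m (· ≤ ·) ≠ [] := by
    intro hc
    have := length_sort m
    rw [hc] at this
    simp [hcard] at this
  set s := Multiset.sort m (· ≤ ·) with hs
  have hdec : s.dropLast ++ [s.getLast hne] = s := List.dropLast_append_getLast hne
  set l := s.getLast hne with hlast
  have hseq : s = V R e ++ [l] := by rw [← hdec, hd]
  have hl : R e < l := by
    rcases Nat.eq_zero_or_pos e with rfl | he
    · have hlm : l ∈ m := by
        rw [← Multiset.mem_sort (· ≤ ·), ← hs, hseq]; simp
      have := hpos l hlm
      rw [R_zero hR]; omega
    · have hpw : s.Pairwise (· < ·) := sort_pairwise_lt hnd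
      rw [hseq, List.pairwise_append] at hpw
      refine hpw.2.2 (R e) ?_ l (by simp)
      unfold V
      rw [List.mem_map]
      exact ⟨e - 1, by rw [List.mem_range]; omega, by congr 1; omega⟩
  have hm_eq : m = l ::ₘ (↑(V R e) : Multiset ℕ) := by
    have : m = (↑s : Multiset ℕ) := (coe_sort m).symm
    rw [this, hseq, coe_append_singleton]
  exact ⟨l, hl, hseq, hm_eq⟩

end Rfacts

theorem Icc_map_eq (R : ℕ → ℕ) : ∀ e : ℕ,
    ((Finset.Icc 1 e).val.map R) = (↑(V R e) : Multiset ℕ)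
  | 0 => by
      rw [Finset.Icc_eq_empty (by omega)]
      rfl
  | (e + 1) => by
      have hins : Finset.Icc 1 (e + 1) = insert (e + 1) (Finset.Icc 1 e) := by
        ext x; simp only [Finset.mem_Icc, Finset.mem_insert]; omega
      rw [hins, Finset.insert_val_of_notMem (by simp), Multiset.map_cons,
        Icc_map_eq R e, V_succ, coe_append_singleton]

end USLI7

namespace USLI7

section Main

variable {L : Set (Multiset ℕ)} {k R : ℕ → ℕ}

theorem divisor_iff (hL : IsUSLI L)
    {e : ℕ} (hInv : ∀ m', InS e m' → (m' ∈ L ↔ Multiset.sort m' (· ≤ ·) < V R e))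
    {m : Multiset ℕ} (hm : InS (e + 1) m) :
    (∃ m' ∈ L, m' ≤ m ∧ m' ≠ m) ↔ (Multiset.sort m (· ≤ ·)).dropLast < V R e := by
  obtain ⟨hnd, hpos, hcard⟩ := hm
  constructor
  · rintro ⟨m', hm'L, hle, hne⟩
    have hlt : m' < m := lt_of_le_of_ne hle hne
    have hcard' : Multiset.card m' < e + 1 := by
      rw [← hcard]; exact Multiset.card_lt_card hlt
    obtain ⟨t, hm't, htm, htcard⟩ := exists_divisor_card hle (n := e) (by omega) (by omega)
    have htL : t ∈ L := hL.1 m' hm'L t hm't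
    have htS : InS e t := ⟨Multiset.nodup_of_le htm hnd,
      fun x hx => hpos x (Multiset.mem_of_le htm hx), htcard⟩
    have h1 : Multiset.sort t (· ≤ ·) < V R e := (hInv t htS).1 htL
    have h2 : (Multiset.sort m (· ≤ ·)).dropLast ≤ Multiset.sort t (· ≤ ·) :=
      dropLast_le_of_sublist (sort_sublist_of_le htm)
        (by rw [length_sort, length_sort, htcard, hcard]) (Multiset.pairwise_sort _ _)
    exact lt_of_le_of_lt h2 h1
  · intro hlt
    set s := Multiset.sort m (· ≤ ·) with hs
    have hsub : s.dropLast <+ s := List.dropLast_sublist s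
    have hsorted : s.dropLast.Pairwise (· ≤ ·) := (Multiset.pairwise_sort m _).sublist hsub
    have hsort' : Multiset.sort (↑s.dropLast : Multiset ℕ) (· ≤ ·) = s.dropLast :=
      sort_coe hsorted
    have hleS : (↑s.dropLast : Multiset ℕ) ≤ m := by
      have := coe_le_of_sublist hsub
      rwa [hs, coe_sort] at this
    have hcard' : Multiset.card (↑s.dropLast : Multiset ℕ) = e := by
      rw [Multiset.coe_card, List.length_dropLast, hs, length_sort, hcard]
      omega
    have hS : InS e (↑s.dropLast : Multiset ℕ) :=
      ⟨Multiset.nodup_of_le hleS hnd, fun x hx => hpos x (Multiset.mem_of_le hleS hx), hcard'⟩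
    refine ⟨_, (hInv _ hS).2 (by rw [hsort']; exact hlt), hleS, ?_⟩
    intro hc
    rw [hc] at hcard'
    omega

theorem minGen_iff (hL : IsUSLI L)
    {e : ℕ} (hInv : ∀ m', InS e m' → (m' ∈ L ↔ Multiset.sort m' (· ≤ ·) < V R e))
    {m : Multiset ℕ} (hm : InS (e + 1) m) :
    m ∈ minGen L ↔ m ∈ L ∧ ¬ (Multiset.sort m (· ≤ ·)).dropLast < V R e := by
  constructor
  · rintro ⟨hmL, hmin⟩
    refine ⟨hmL, fun hlt => ?_⟩
    obtain ⟨m', hm'L, hle, hne⟩ := (divisor_iff hL hInv hm).2 hlt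
    exact hne (hmin m' hm'L hle)
  · rintro ⟨hmL, hnlt⟩
    refine ⟨hmL, fun m' hm'L hle => ?_⟩
    by_contra hne
    exact hnlt ((divisor_iff hL hInv hm).1 ⟨m', hm'L, hle, hne⟩)

theorem gens_eq (hL : IsUSLI L)
    (hk : ∀ i : ℕ, 1 ≤ i → {m ∈ minGen L | Multiset.card m = i}.ncard = k i)
    (hR : ∀ j, R j = j + ∑ i ∈ Finset.Icc 1 j, k i)
    {e : ℕ} (hInv : ∀ m', InS e m' → (m' ∈ L ↔ Multiset.sort m' (· ≤ ·) < V R e)) :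
    {m | m ∈ minGen L ∧ Multiset.card m = e + 1} =
      {m : Multiset ℕ | ∃ l, R e < l ∧ l < R (e + 1) ∧
        m = l ::ₘ (↑(V R e) : Multiset ℕ)} := by
  set M := {m | m ∈ minGen L ∧ Multiset.card m = e + 1} with hM
  have hfin : M.Finite := hL.2.2.1 (e + 1)
  have hcard : M.ncard = k (e + 1) := hk (e + 1) (by omega)
  have hMS : ∀ m ∈ M, InS (e + 1) m := fun m hm =>
    ⟨(hL.2.1 m hm.1).1, (hL.2.1 m hm.1).2, hm.2⟩
  have hMiff : ∀ m, InS (e + 1) m →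
      (m ∈ M ↔ m ∈ L ∧ ¬ (Multiset.sort m (· ≤ ·)).dropLast < V R e) := by
    intro m hm
    constructor
    · rintro ⟨h1, _⟩; exact (minGen_iff hL hInv hm).1 h1
    · intro h; exact ⟨(minGen_iff hL hInv hm).2 h, hm.2.2⟩
  -- pushing membership up the lex order within M
  have hup : ∀ m ∈ M, ∀ l : ℕ, R e < l → (V R e ++ [l]) ≤ Multiset.sort m (· ≤ ·) →
      (l ::ₘ (↑(V R e) : Multiset ℕ)) ∈ M := by
    intro m hm l hl hle
    obtain ⟨hInS', hsort'⟩ := mk_mem (k := k) hR hl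
    have hInS := hMS m hm
    rcases hle.lt_or_eq with hlt | heq
    · have hmL : m ∈ L := ((hMiff m hInS).1 hm).1
      have hLmem : (l ::ₘ (↑(V R e) : Multiset ℕ)) ∈ L := by
        apply hL.2.2.2 m hmL _ hInS'.1 hInS'.2.1
        · rw [hInS'.2.2, hInS.2.2]
        · show Multiset.sort _ (· ≤ ·) < Multiset.sort m (· ≤ ·)
          rw [hsort']
          exact hlt
      refine (hMiff _ hInS').2 ⟨hLmem, ?_⟩
      rw [hsort', List.dropLast_concat]
      exact lt_irrefl _
    · have : m = l ::ₘ (↑(V R e) : Multiset ℕ) := by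
        rw [← coe_sort m, ← heq, coe_append_singleton]
      rwa [← this]
  -- no element of M can have dropLast strictly above V R e
  have hINF : ∀ m ∈ M, ¬ V R e < (Multiset.sort m (· ≤ ·)).dropLast := by
    intro m hm hlt
    have hInS := hMS m hm
    have hne : Multiset.sort m (· ≤ ·) ≠ [] := by
      intro hc
      have := length_sort m
      rw [hc, hInS.2.2] at this
      simp at this
    have hdec : (Multiset.sort m (· ≤ ·)).dropLast ++ [(Multiset.sort m (· ≤ ·)).getLast hne]
        = Multiset.sort m (· ≤ ·) := List.dropLast_append_getLast hne
    have hlen : (V R e).length = (Multiset.sort m (· ≤ ·)).dropLast.length := by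
      rw [V_length, List.length_dropLast, length_sort, hInS.2.2]
      omega
    have hmem : ∀ n : ℕ, ((R e + 1 + n) ::ₘ (↑(V R e) : Multiset ℕ)) ∈ M := by
      intro n
      apply hup m hm _ (by omega)
      rw [← hdec]
      exact le_of_lt ((lex_append_iff hlen).2 (Or.inl hlt))
    have hinj : Function.Injective (fun n : ℕ => (R e + 1 + n) ::ₘ (↑(V R e) : Multiset ℕ)) := by
      intro n n' hnn
      simp only at hnn
      have h1 := (mk_mem (k := k) hR (show R e < R e + 1 + n by omega)).2
      have h2 := (mk_mem (k := k) hR (show R e < R e + 1 + n' by omega)).2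
      have := congrArg (fun x => Multiset.sort x (· ≤ ·)) hnn
      rw [h1, h2] at this
      have := List.append_cancel_left this
      simp at this
      omega
    have : M.Infinite := by
      apply Set.Infinite.mono _ (Set.infinite_range_of_injective hinj)
      rw [Set.range_subset_iff]
      exact hmem
    exact this hfin
  rcases M.eq_empty_or_nonempty with hMe | hMne
  · have hk0 : k (e + 1) = 0 := by rw [← hcard, hMe, Set.ncard_empty]
    have hRe : R (e + 1) = R e + 1 := by rw [R_succ hR]; omega
    rw [hMe]
    ext m
    simp only [Set.mem_empty_iff_false, Set.mem_setOf_eq, false_iff]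
    rintro ⟨l, h1, h2, _⟩
    omega
  · obtain ⟨m0, hm0, hmax'⟩ :=
      Set.Finite.exists_maximalFor (fun m => Multiset.sort m (· ≤ ·)) M hfin hMne
    have hub : ∀ m ∈ M, Multiset.sort m (· ≤ ·) ≤ Multiset.sort m0 (· ≤ ·) := by
      intro m hm
      by_contra h
      have hlt := not_le.1 h
      exact absurd (hmax' hm (le_of_lt hlt)) (not_le.2 hlt)
    have hm0S := hMS m0 hm0
    have h1 : ¬ (Multiset.sort m0 (· ≤ ·)).dropLast < V R e := ((hMiff m0 hm0S).1 hm0).2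
    have h2 : ¬ V R e < (Multiset.sort m0 (· ≤ ·)).dropLast := hINF m0 hm0
    have hVd : (Multiset.sort m0 (· ≤ ·)).dropLast = V R e :=
      le_antisymm (not_lt.1 h2) (not_lt.1 h1)
    obtain ⟨l0, hl0, hs0, hm0eq⟩ := decompose hR hm0S hVd
    have hVlen : ∀ l : ℕ, ((V R e) ++ [l]).length = e + 1 := by
      intro l; rw [List.length_append, V_length]; simp
    have hMeq : M = (fun l => l ::ₘ (↑(V R e) : Multiset ℕ)) '' Set.Ioc (R e) l0 := by
      ext m
      constructor
      · intro hm
        have hInS := hMS m hm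
        have hd : (Multiset.sort m (· ≤ ·)).dropLast = V R e :=
          le_antisymm (not_lt.1 (hINF m hm)) (not_lt.1 ((hMiff m hInS).1 hm).2)
        obtain ⟨l, hl, hseq, hmeq⟩ := decompose hR hInS hd
        refine ⟨l, ⟨hl, ?_⟩, hmeq.symm⟩
        have hle := hub m hm
        rw [hseq, hs0] at hle
        rcases hle.lt_or_eq with h | h
        · rcases (lex_append_iff rfl).1 h with h' | ⟨_, h'⟩
          · exact absurd h' (lt_irrefl _)
          · omega
        · have := List.append_cancel_left h
          simp at this
          omega
      · rintro ⟨l, ⟨hl1, hl2⟩, rfl⟩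
        apply hup m0 hm0 l hl1
        rw [hs0]
        rcases hl2.lt_or_eq with h | h
        · exact le_of_lt ((lex_append_iff rfl).2 (Or.inr ⟨rfl, h⟩))
        · rw [h]
    have hIcount : M.ncard = l0 - R e := by
      rw [hMeq]
      rw [Set.ncard_image_of_injOn]
      · rw [← Finset.coe_Ioc, Set.ncard_coe_finset, Nat.card_Ioc]
      · intro a ha b hb hab
        simp only [Set.mem_Ioc] at ha hb
        have h1 := (mk_mem (k := k) hR ha.1).2
        have h2 := (mk_mem (k := k) hR hb.1).2
        have := congrArg (fun x => Multiset.sort x (· ≤ ·)) hab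
        rw [h1, h2] at this
        have := List.append_cancel_left this
        simpa using this
    have hRsucc := R_succ (k := k) hR e
    have hl0eq : l0 = R (e + 1) - 1 := by omega
    rw [hMeq]
    ext m
    simp only [Set.mem_image, Set.mem_Ioc, Set.mem_setOf_eq]
    constructor
    · rintro ⟨l, ⟨ha, hb⟩, rfl⟩
      exact ⟨l, ha, by omega, rfl⟩
    · rintro ⟨l, ha, hb, rfl⟩
      exact ⟨l, ⟨ha, by omega⟩, rfl⟩

end Main

end USLI7

namespace USLI7

section Main2

variable {L : Set (Multiset ℕ)} {k R : ℕ → ℕ}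

theorem inv_all (hL : IsUSLI L) (h0 : (0 : Multiset ℕ) ∉ L)
    (hk : ∀ i : ℕ, 1 ≤ i → {m ∈ minGen L | Multiset.card m = i}.ncard = k i)
    (hR : ∀ j, R j = j + ∑ i ∈ Finset.Icc 1 j, k i) :
    ∀ e : ℕ, ∀ m', InS e m' → (m' ∈ L ↔ Multiset.sort m' (· ≤ ·) < V R e) := by
  intro e
  induction e with
  | zero =>
    intro m hm
    have hm0 : m = 0 := Multiset.card_eq_zero.1 hm.2.2
    subst hm0
    constructor
    · intro h; exact absurd h h0
    · intro h
      rw [Multiset.sort_zero] at h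
      exact absurd (lt_iff.1 h) List.not_lex_nil
  | succ e ih =>
    intro m hm
    have hgens := gens_eq hL hk hR ih
    have hne : Multiset.sort m (· ≤ ·) ≠ [] := by
      intro hc
      have := length_sort m
      rw [hc, hm.2.2] at this
      simp at this
    have hdec : (Multiset.sort m (· ≤ ·)).dropLast ++ [(Multiset.sort m (· ≤ ·)).getLast hne]
        = Multiset.sort m (· ≤ ·) := List.dropLast_append_getLast hne
    have hlen : (Multiset.sort m (· ≤ ·)).dropLast.length = (V R e).length := by
      rw [List.length_dropLast, length_sort, hm.2.2, V_length]
      omega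
    constructor
    · intro hmL
      rcases lt_trichotomy ((Multiset.sort m (· ≤ ·)).dropLast) (V R e) with hlt | heq | hgt
      · rw [← hdec, V_succ]
        exact (lex_append_iff hlen).2 (Or.inl hlt)
      · have hmin : m ∈ minGen L :=
          (minGen_iff hL ih hm).2 ⟨hmL, by rw [heq]; exact lt_irrefl _⟩
        have hmem : m ∈ {m | m ∈ minGen L ∧ Multiset.card m = e + 1} := ⟨hmin, hm.2.2⟩
        rw [hgens] at hmem
        obtain ⟨l, hl1, hl2, rfl⟩ := hmem
        rw [(mk_mem (k := k) hR hl1).2, V_succ]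
        exact (lex_append_iff rfl).2 (Or.inr ⟨rfl, hl2⟩)
      · exfalso
        have hmin : m ∈ minGen L :=
          (minGen_iff hL ih hm).2 ⟨hmL, fun hc => lt_asymm hgt hc⟩
        have hmem : m ∈ {m | m ∈ minGen L ∧ Multiset.card m = e + 1} := ⟨hmin, hm.2.2⟩
        rw [hgens] at hmem
        obtain ⟨l, hl1, hl2, rfl⟩ := hmem
        rw [(mk_mem (k := k) hR hl1).2, List.dropLast_concat] at hgt
        exact lt_irrefl _ hgt
    · intro hlt
      rw [V_succ, ← hdec] at hlt
      rcases (lex_append_iff hlen).1 hlt with h' | ⟨heq, hlast⟩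
      · obtain ⟨m', hm'L, hle, _⟩ := (divisor_iff hL ih hm).2 h'
        exact hL.1 m' hm'L m hle
      · obtain ⟨l, hl, hseq, hmeq⟩ := decompose hR hm heq
        have hgl : l = (Multiset.sort m (· ≤ ·)).getLast hne := by
          have h1 : V R e ++ [l] =
              (Multiset.sort m (· ≤ ·)).dropLast ++
                [(Multiset.sort m (· ≤ ·)).getLast hne] := by
            rw [← hseq, hdec]
          rw [heq] at h1
          have := List.append_cancel_left h1
          simpa using this
        have hl2 : l < R (e + 1) := by rw [hgl]; exact hlast
        have hmem : m ∈ {m | m ∈ minGen L ∧ Multiset.card m = e + 1} := by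
          rw [hgens]
          exact ⟨l, hl, hl2, hmeq⟩
        exact hmem.1.1

end Main2

end USLI7


/-- if L is a USLI with k_i minimal generators in degree i and
R_j = j + k_1 + ⋯ + k_j, then the minimal generators of L of degree r are exactly the
monomials x_{R_1} ⋯ x_{R_{r-1}} · x_l with R_{r-1} + 1 ≤ l ≤ R_r − 1. -/
theorem usli_minimal_generators (L : Set (Multiset ℕ)) (hL : IsUSLI L)
    (k : ℕ → ℕ) (hk : ∀ i : ℕ, 1 ≤ i → {m ∈ minGen L | Multiset.card m = i}.ncard = k i)
    (R : ℕ → ℕ) (hR : ∀ j, R j = j + ∑ i ∈ Finset.Icc 1 j, k i) :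
    ∀ r : ℕ, 1 ≤ r →
      {m | m ∈ minGen L ∧ Multiset.card m = r} =
      {m : Multiset ℕ | ∃ l : ℕ, R (r - 1) + 1 ≤ l ∧ l ≤ R r - 1 ∧
        m = l ::ₘ ((Finset.Icc 1 (r - 1)).val.map R)} := by
  intro r hr
  obtain ⟨e, rfl⟩ : ∃ e, r = e + 1 := ⟨r - 1, by omega⟩
  have hee : e + 1 - 1 = e := rfl
  have hRsucc := USLI7.R_succ (k := k) (R := R) hR e
  have hRge := USLI7.R_ge (k := k) (R := R) hR (e + 1)
  have hicc := USLI7.Icc_map_eq R e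
  by_cases h0 : (0 : Multiset ℕ) ∈ L
  · have hgen0 : ∀ m ∈ minGen L, m = 0 := fun m hm => (hm.2 0 h0 (Multiset.zero_le m)).symm
    have hLHS : {m | m ∈ minGen L ∧ Multiset.card m = e + 1} = (∅ : Set (Multiset ℕ)) := by
      ext m
      simp only [Set.mem_setOf_eq, Set.mem_empty_iff_false, iff_false, not_and]
      intro h1 h2
      rw [hgen0 m h1] at h2
      simp at h2
    have hke : k (e + 1) = 0 := by
      rw [← hk (e + 1) (by omega), hLHS, Set.ncard_empty]
    rw [hLHS]
    ext m
    simp only [Set.mem_empty_iff_false, Set.mem_setOf_eq, false_iff, hee]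
    rintro ⟨l, h1, h2, _⟩
    omega
  · have hInv := USLI7.inv_all hL h0 hk hR e
    have hgens := USLI7.gens_eq hL hk hR hInv
    rw [hgens]
    ext m
    simp only [Set.mem_setOf_eq, hee, hicc]
    constructor
    · rintro ⟨l, h1, h2, rfl⟩
      exact ⟨l, by omega, by omega, rfl⟩
    · rintro ⟨l, h1, h2, rfl⟩
      exact ⟨l, by omega, by omega, rfl⟩
end

section
/- Let Γ be a USLI complex on [n] with Stanley-Reisner ideal L(k_•) ≠ 0, let k_d be the last nonzero entry of k_•, and set R_j = j + k_1 + ⋯ + k_j. Then Γ has exactly d facets, given by F_i = {R_1,...,R_{i-1}} ∪ [R_i+1, n] for 1 ≤ i ≤ d−1, and F_d = {R_1,...,R_{d-1}} ∪ [R_d, n]. -/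
def genList (R : ℕ → ℕ) (j t : ℕ) : List ℕ := (List.range' 1 (j-1)).map R ++ [t]

def genM (R : ℕ → ℕ) (j t : ℕ) : Multiset ℕ := (genList R j t : List ℕ)

lemma mem_genList {R : ℕ → ℕ} {j t x : ℕ} :
    x ∈ genList R j t ↔ (∃ l, 1 ≤ l ∧ l ≤ j - 1 ∧ x = R l) ∨ x = t := by
  simp only [genList, List.mem_append, List.mem_map, List.mem_range', List.mem_singleton]
  constructor
  · rintro (⟨i, ⟨i1, hi1, rfl⟩, rfl⟩ | rfl)
    · exact Or.inl ⟨1 + 1*i1, by omega, by omega, rfl⟩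
    · exact Or.inr rfl
  · rintro (⟨l, h1, h2, rfl⟩ | rfl)
    · exact Or.inl ⟨l, ⟨l - 1, by omega, by omega⟩, rfl⟩
    · exact Or.inr rfl

lemma mem_genM {R : ℕ → ℕ} {j t x : ℕ} :
    x ∈ genM R j t ↔ (∃ l, 1 ≤ l ∧ l ≤ j - 1 ∧ x = R l) ∨ x = t := by
  rw [genM, Multiset.mem_coe, mem_genList]

lemma length_genList {R : ℕ → ℕ} {j t : ℕ} (hj : 1 ≤ j) : (genList R j t).length = j := by
  simp [genList]; omega

lemma card_genM {R : ℕ → ℕ} {j t : ℕ} (hj : 1 ≤ j) : Multiset.card (genM R j t) = j := by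
  rw [genM, Multiset.coe_card, length_genList hj]

lemma sorted_genList {R : ℕ → ℕ} (hmono : StrictMono R) {j t : ℕ} (ht : R (j-1) < t) :
    (genList R j t).Pairwise (· < ·) := by
  unfold genList
  rw [List.pairwise_append]
  refine ⟨List.Pairwise.map R (fun a b h => hmono h) (List.pairwise_lt_range' (s := 1) (n := j-1)), by simp, ?_⟩
  intro a ha b hb
  simp only [List.mem_singleton] at hb; subst hb
  simp only [List.mem_map, List.mem_range'] at ha
  obtain ⟨i, ⟨i1, hi1, rfl⟩, rfl⟩ := ha
  exact lt_of_le_of_lt (hmono.monotone (by omega)) ht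

lemma nodup_genM {R : ℕ → ℕ} (hmono : StrictMono R) {j t : ℕ} (ht : R (j-1) < t) :
    (genM R j t).Nodup := by
  rw [genM, Multiset.coe_nodup]
  exact (sorted_genList hmono ht).imp ne_of_lt

lemma sort_genM {R : ℕ → ℕ} (hmono : StrictMono R) {j t : ℕ} (ht : R (j-1) < t) :
    (genM R j t).sort (· ≤ ·) = genList R j t :=
  List.Perm.eq_of_pairwise' (Multiset.pairwise_sort _ _) ((sorted_genList hmono ht).imp le_of_lt)
    (Multiset.coe_eq_coe.mp (Multiset.sort_eq _ _))

lemma one_le_of_mem_genM {R : ℕ → ℕ} (hmono : StrictMono R) (hR0 : R 0 = 0) {j t x : ℕ}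
    (ht : R (j-1) < t) (hx : x ∈ genM R j t) : 1 ≤ x := by
  rcases mem_genM.mp hx with ⟨l, hl1, _, rfl⟩ | rfl
  · have : R 0 < R l := hmono (by omega); omega
  · omega

lemma genM_inj {R : ℕ → ℕ} (hmono : StrictMono R) {j t t' : ℕ}
    (ht : R (j-1) < t) (ht' : R (j-1) < t') (h : genM R j t = genM R j t') : t = t' := by
  have : t ∈ genM R j t' := h ▸ mem_genM.mpr (Or.inr rfl)
  rcases mem_genM.mp this with ⟨l, hl1, hl2, he⟩ | he
  · have : R l ≤ R (j-1) := hmono.monotone (by omega)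
    omega
  · exact he

lemma lex_decomp {l1 l2 : List ℕ} (h : List.Lex (· < ·) l1 l2) (hlen : l2.length ≤ l1.length) :
    ∃ p a b s1 s2, l1 = p ++ a :: s1 ∧ l2 = p ++ b :: s2 ∧ a < b := by
  induction h with
  | nil => simp at hlen
  | @rel a l1' b l2' hab => exact ⟨[], a, b, l1', l2', rfl, rfl, hab⟩
  | @cons a l1' l2' h ih =>
      obtain ⟨p, x, y, s1, s2, h1, h2, hxy⟩ := ih (by simpa using hlen)
      exact ⟨a :: p, x, y, s1, s2, by simp [h1], by simp [h2], hxy⟩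

lemma lex_total : ∀ (l1 l2 : List ℕ), l1 ≠ l2 →
    List.Lex (· < ·) l1 l2 ∨ List.Lex (· < ·) l2 l1 := by
  intro l1
  induction l1 with
  | nil =>
      intro l2 h
      cases l2 with
      | nil => exact absurd rfl h
      | cons b t => exact Or.inl List.Lex.nil
  | cons a t1 ih =>
      intro l2 h
      cases l2 with
      | nil => exact Or.inr List.Lex.nil
      | cons b t2 =>
          rcases lt_trichotomy a b with hab | hab | hab
          · exact Or.inl (List.Lex.rel hab)
          · subst hab
            rcases ih t2 (fun e => h (by rw [e])) with h' | h'
            · exact Or.inl (List.Lex.cons h')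
            · exact Or.inr (List.Lex.cons h')
          · exact Or.inr (List.Lex.rel hab)

lemma monLexGT_total {m m' : Multiset ℕ} (h : m ≠ m') : monLexGT m m' ∨ monLexGT m' m := by
  apply lex_total
  intro e
  apply h
  rw [← Multiset.sort_eq m (· ≤ ·), ← Multiset.sort_eq m' (· ≤ ·), e]

lemma lex_step {R : ℕ → ℕ} (hmono : StrictMono R) (hR0 : R 0 = 0) {j t : ℕ} (hj : 1 ≤ j)
    (ht : R (j-1) < t) {m' : Multiset ℕ} (hnd : m'.Nodup) (h1 : ∀ x ∈ m', 1 ≤ x)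
    (hcard : Multiset.card m' = j) (hlex : monLexGT m' (genM R j t)) :
    (∃ l a, 1 ≤ l ∧ l ≤ j - 1 ∧ R (l-1) < a ∧ a < R l ∧ genM R l a ≤ m') ∨
    (∃ a, R (j-1) < a ∧ a < t ∧ m' = genM R j a) := by
  classical
  set l' : List ℕ := m'.sort (· ≤ ·) with hl'
  have hl'coe : (l' : Multiset ℕ) = m' := Multiset.sort_eq _ _
  have hl'sortedle : l'.Pairwise (· ≤ ·) := Multiset.pairwise_sort _ _
  have hl'nodup : l'.Nodup := by rw [← Multiset.coe_nodup, hl'coe]; exact hnd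
  have hl'sorted : l'.Pairwise (· < ·) :=
    (hl'sortedle.and hl'nodup).imp fun {a b} h => lt_of_le_of_ne h.1 h.2
  have hl'len : l'.length = j := by
    rw [← Multiset.coe_card, hl'coe, hcard]
  have hlex' : List.Lex (· < ·) l' (genList R j t) := by
    rw [monLexGT, sort_genM hmono ht] at hlex; exact hlex
  obtain ⟨p, a, b, s1, s2, he1, he2, hab⟩ :=
    lex_decomp hlex' (by rw [hl'len, length_genList hj])
  have hpa : ∀ x ∈ p, x < a := by
    intro x hx
    have := List.pairwise_append.mp (he1 ▸ hl'sorted)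
    exact this.2.2 x hx a (List.mem_cons_self (a := a) (l := s1))
  have ham : a ∈ m' := by
    rw [← hl'coe, he1]; simp
  have hplen : p.length + 1 + s2.length = j := by
    have := length_genList (R := R) (t := t) hj
    rw [he2] at this; simp at this; omega
  set i := p.length with hi
  have hij : i ≤ j - 1 := by omega
  have hpval : p = (List.range' 1 i).map R := by
    have h2 : (genList R j t).take i = p := by
      rw [he2]; exact List.take_left' rfl
    have h3 : (genList R j t).take i = (List.range' 1 i).map R := by
      rw [genList, List.take_append_of_le_length (by simp; omega)]
      have hsp : List.range' 1 (j-1) = List.range' 1 i ++ List.range' (1+i) (j-1-i) := by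
        have h6 := List.range'_append (s := 1) (m := i) (n := j-1-i) (step := 1)
        simp only [one_mul, Nat.add_comm i (j-1-i)] at h6
        have e : j - 1 = j - 1 - i + i := by omega
        rw [e, ← h6, Nat.add_sub_cancel]
      rw [hsp, List.map_append, List.take_append_of_le_length (by simp),
        List.take_of_length_le (by simp)]
    rw [← h2, h3]
  have hRia : i ≥ 1 → R i < a := by
    intro hi1
    apply hpa
    rw [hpval]
    exact List.mem_map_of_mem (f := R) (by simp [List.mem_range']; exact ⟨i - 1, by omega, by omega⟩)
  have ha0 : R 0 < a := by
    have := h1 a ham; omega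
  rcases lt_or_eq_of_le hij with hilt | hieq
  · -- i < j - 1 : divisibility by a lower generator
    left
    have hb : b = R (i+1) := by
      have hd : (genList R j t).drop i = b :: s2 := by
        rw [he2]; exact List.drop_left' rfl
      rw [genList, List.drop_append_of_le_length (by simp; omega)] at hd
      have hsplit : List.range' 1 (j-1) = List.range' 1 i ++ ((1+i) :: List.range' (1+i+1) (j-2-i)) := by
        have h5 : (1+i) :: List.range' (1+i+1) (j-2-i) = List.range' (1+i) (j-1-i) := by
          have e : j - 1 - i = (j - 2 - i) + 1 := by omega
          rw [e, List.range'_succ]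
        rw [h5]
        have h6 := List.range'_append (s := 1) (m := i) (n := j-1-i) (step := 1)
        simp only [one_mul, Nat.add_comm i (j-1-i)] at h6
        have e : j - 1 = j - 1 - i + i := by omega
        rw [e, ← h6, Nat.add_sub_cancel]
      rw [hsplit, List.map_append, List.drop_append_of_le_length (by simp),
        List.drop_of_length_le (by simp)] at hd
      simp at hd
      rw [Nat.add_comm i 1]
      exact hd.1.symm
    refine ⟨i+1, a, by omega, by omega, ?_, ?_, ?_⟩
    · simp only [Nat.add_sub_cancel]
      rcases Nat.eq_zero_or_pos i with h0 | h0
      · rw [h0]; exact ha0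
      · exact hRia h0
    · rw [← hb]; exact hab
    · have : genM R (i+1) a = ((p ++ [a] : List ℕ) : Multiset ℕ) := by
        rw [genM, genList]
        simp only [Nat.add_sub_cancel]
        rw [hpval]
      rw [this, ← hl'coe, he1]
      exact Multiset.coe_le.mpr (((List.nil_sublist s1).cons₂ a).append_left p).subperm
  · -- i = j - 1 : m' is itself of generator shape
    right
    have hb : b = t ∧ s2 = [] := by
      have hd : (genList R j t).drop i = b :: s2 := by
        rw [he2]; exact List.drop_left' rfl
      rw [genList, List.drop_append_of_le_length (by simp; omega), hieq,
        List.drop_of_length_le (by simp)] at hd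
      simp at hd
      exact ⟨hd.1.symm, hd.2⟩
    have hs1 : s1 = [] := by
      have := hl'len
      rw [he1] at this; simp at this
      have : s1.length = 0 := by omega
      exact List.length_eq_zero_iff.mp this
    refine ⟨a, ?_, ?_, ?_⟩
    · rcases Nat.eq_zero_or_pos i with h0 | h0
      · rw [← hieq, h0]; exact ha0
      · rw [← hieq]; exact hRia h0
    · rw [← hb.1]; exact hab
    · have hgl : genList R j a = p ++ [a] := by rw [genList, ← hieq, ← hpval]
      rw [← hl'coe, he1, hs1, genM, hgl]

lemma exists_minGen_le {L : Set (Multiset ℕ)} (hmon : IsMonIdeal L) :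
    ∀ m ∈ L, ∃ g ∈ minGen L, g ≤ m := by
  have H : ∀ N, ∀ m ∈ L, Multiset.card m ≤ N → ∃ g ∈ minGen L, g ≤ m := by
    intro N
    induction N with
    | zero =>
      intro m hm hc
      exact ⟨m, ⟨hm, fun m' h' hle =>
        Multiset.eq_of_le_of_card_le hle (le_trans hc (Nat.zero_le _))⟩, le_rfl⟩
    | succ N ih =>
      intro m hm hc
      by_cases hmin : ∀ m' ∈ L, m' ≤ m → m' = m
      · exact ⟨m, ⟨hm, hmin⟩, le_rfl⟩
      · push_neg at hmin
        obtain ⟨m', hm', hle, hne⟩ := hmin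
        have hlt : Multiset.card m' < Multiset.card m :=
          lt_of_le_of_ne (Multiset.card_le_card hle)
            (fun e => hne (Multiset.eq_of_le_of_card_le hle (le_of_eq e.symm)))
        obtain ⟨g, hg, hgle⟩ := ih m' hm' (by omega)
        exact ⟨g, hg, hgle.trans hle⟩
  exact fun m hm => H (Multiset.card m) m hm le_rfl

theorem minGen_eq (L : Set (Multiset ℕ)) (hL : IsUSLI L)
    (k : ℕ → ℕ) (hk : ∀ i : ℕ, 1 ≤ i → {m ∈ minGen L | Multiset.card m = i}.ncard = k i)
    (d : ℕ) (hd : 1 ≤ d) (hkd : k d ≠ 0) (hlast : ∀ i, d < i → k i = 0)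
    (R : ℕ → ℕ) (hR : ∀ j, R j = j + ∑ i ∈ Finset.Icc 1 j, k i) :
    ∀ j, j ≤ d → 1 ≤ j →
      {m ∈ minGen L | Multiset.card m = j} = genM R j '' Set.Ioo (R (j-1)) (R j) := by
  obtain ⟨hmonI, hsq, hfin, hlexL⟩ := hL
  have hR0 : R 0 = 0 := by rw [hR]; simp
  have hstep : ∀ j : ℕ, R (j+1) = R j + 1 + k (j+1) := by
    intro j
    rw [hR, hR, Finset.sum_Icc_succ_top (by omega)]
    ring
  have hmono : StrictMono R := strictMono_nat_of_lt_succ fun j => by rw [hstep]; omega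
  have hzero : (0 : Multiset ℕ) ∉ L := by
    intro h0
    have hempty : {m ∈ minGen L | Multiset.card m = d} = ∅ := by
      ext m
      simp only [Set.mem_setOf_eq, Set.mem_empty_iff_false, iff_false, not_and]
      intro hm hc
      have h2 := hm.2 0 h0 (Multiset.zero_le m)
      rw [← h2] at hc
      simp at hc
      omega
    have h3 := hk d hd
    rw [hempty] at h3
    simp at h3
    exact hkd h3.symm
  have hcard_le : ∀ g ∈ minGen L, 1 ≤ Multiset.card g ∧ Multiset.card g ≤ d := by
    intro g hg
    constructor
    · by_contra h
      have h2 : Multiset.card g = 0 := by omega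
      rw [Multiset.card_eq_zero] at h2
      exact hzero (h2 ▸ hg.1)
    · by_contra h
      push_neg at h
      have h1 := hk (Multiset.card g) (by omega)
      rw [hlast _ h] at h1
      have h2 : g ∈ {m ∈ minGen L | Multiset.card m = Multiset.card g} := ⟨hg, rfl⟩
      have h4 := (Set.ncard_eq_zero (hfin (Multiset.card g))).mp h1
      rw [h4] at h2
      exact h2
  intro j
  induction j using Nat.strong_induction_on with
  | _ j ih =>
  intro hjd hj1
  have hIH : ∀ i, 1 ≤ i → i < j →
      {m ∈ minGen L | Multiset.card m = i} = genM R i '' Set.Ioo (R (i-1)) (R i) :=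
    fun i h1 h2 => ih i h2 (by omega) h1
  have hgen_min : ∀ i, 1 ≤ i → i < j → ∀ a, R (i-1) < a → a < R i → genM R i a ∈ minGen L := by
    intro i h1 h2 a ha1 ha2
    have h3 : genM R i a ∈ {m ∈ minGen L | Multiset.card m = i} := by
      rw [hIH i h1 h2]
      exact ⟨a, by rw [Set.mem_Ioo]; exact ⟨ha1, ha2⟩, rfl⟩
    exact h3.1
  have hCmin : ∀ m ∈ minGen L, Multiset.card m = j →
      ∀ l a, 1 ≤ l → l ≤ j - 1 → R (l-1) < a → a < R l → ¬ genM R l a ≤ m := by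
    intro m hm hc l a h1 h2 h3 h4 hle
    have hg := hgen_min l h1 (by omega) a h3 h4
    have he := hm.2 _ hg.1 hle
    have hcard := card_genM (R := R) (t := a) h1
    rw [he] at hcard
    omega
  have hGhatC : ∀ a, R (j-1) < a → a < R j →
      ∀ l b, 1 ≤ l → l ≤ j - 1 → R (l-1) < b → b < R l → ¬ genM R l b ≤ genM R j a := by
    intro a ha1 ha2 l b h1 h2 h3 h4 hle
    have hb : b ∈ genM R j a := Multiset.mem_of_le hle (mem_genM.mpr (Or.inr rfl))
    rcases mem_genM.mp hb with ⟨s, hs1, hs2, rfl⟩ | rfl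
    · have e1 : l - 1 < s := by
        by_contra hcon; push_neg at hcon
        exact absurd h3 (not_lt.mpr (hmono.monotone hcon))
      have e2 : s < l := by
        by_contra hcon; push_neg at hcon
        exact absurd h4 (not_lt.mpr (hmono.monotone hcon))
      omega
    · have : R l ≤ R (j-1) := hmono.monotone (by omega)
      omega
  have hGup : ∀ g ∈ minGen L, Multiset.card g = j → ∀ m' : Multiset ℕ, m'.Nodup →
      (∀ x ∈ m', 1 ≤ x) → Multiset.card m' = j →
      (∀ l a, 1 ≤ l → l ≤ j - 1 → R (l-1) < a → a < R l → ¬ genM R l a ≤ m') →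
      monLexGT m' g → m' ∈ minGen L := by
    intro g hg hcg m' hnd h1 hcm hC hGT
    have hm'L : m' ∈ L := hlexL g hg.1 m' hnd h1 (by omega) hGT
    refine ⟨hm'L, ?_⟩
    intro m'' hm'' hle
    by_contra hne
    have hlt : Multiset.card m'' < j := by
      have hcc := Multiset.card_le_card hle
      rcases lt_or_eq_of_le hcc with hcc' | hcc'
      · omega
      · exact absurd (Multiset.eq_of_le_of_card_le hle (by omega)) hne
    obtain ⟨g'', hg'', hgle⟩ := exists_minGen_le hmonI m'' hm''
    obtain ⟨hc1, hc2⟩ := hcard_le g'' hg''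
    have hcj : Multiset.card g'' < j := lt_of_le_of_lt (Multiset.card_le_card hgle) hlt
    have h5 : g'' ∈ {m ∈ minGen L | Multiset.card m = Multiset.card g''} := ⟨hg'', rfl⟩
    rw [hIH (Multiset.card g'') hc1 hcj] at h5
    obtain ⟨a, ha, he⟩ := h5
    rw [Set.mem_Ioo] at ha
    exact hC (Multiset.card g'') a hc1 (by omega) ha.1 ha.2 (by rw [he]; exact hgle.trans hle)
  have hHup : ∀ a, R (j-1) < a → a < R j → ∀ m' : Multiset ℕ, m'.Nodup →
      (∀ x ∈ m', 1 ≤ x) → Multiset.card m' = j →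
      (∀ l b, 1 ≤ l → l ≤ j - 1 → R (l-1) < b → b < R l → ¬ genM R l b ≤ m') →
      monLexGT m' (genM R j a) → ∃ b, R (j-1) < b ∧ b < R j ∧ m' = genM R j b := by
    intro a ha1 ha2 m' hnd h1 hcm hC hGT
    rcases lex_step hmono hR0 hj1 ha1 hnd h1 hcm hGT with ⟨l, b, e1, e2, e3, e4, e5⟩ | ⟨b, e1, e2, e3⟩
    · exact absurd e5 (hC l b e1 e2 e3 e4)
    · exact ⟨b, e1, by omega, e3⟩
  have hGc : {m ∈ minGen L | Multiset.card m = j}.ncard = k j := hk j hj1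
  have hGfin := hfin j
  have hioo : (Set.Ioo (R (j-1)) (R j)).ncard = k j := by
    rw [← Finset.coe_Ioo, Set.ncard_coe_finset, Nat.card_Ioo]
    have h6 := hstep (j-1)
    have e : j - 1 + 1 = j := by omega
    rw [e] at h6
    omega
  have hinj : Set.InjOn (genM R j) (Set.Ioo (R (j-1)) (R j)) := by
    intro a ha b hb he
    exact genM_inj hmono ha.1 hb.1 he
  have hHc : (genM R j '' Set.Ioo (R (j-1)) (R j)).ncard = k j := by
    rw [Set.ncard_image_of_injOn hinj, hioo]
  have hHfin : (genM R j '' Set.Ioo (R (j-1)) (R j)).Finite :=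
    (Set.finite_Ioo _ _).image _
  have hsub : {m ∈ minGen L | Multiset.card m = j} ⊆ genM R j '' Set.Ioo (R (j-1)) (R j) := by
    by_contra hns
    obtain ⟨x, hxG, hxH⟩ := Set.not_subset.mp hns
    obtain ⟨hxnd, hx1⟩ := hsq x hxG.1
    have hxC := hCmin x hxG.1 hxG.2
    have hHsub : genM R j '' Set.Ioo (R (j-1)) (R j) ⊆
        {m ∈ minGen L | Multiset.card m = j} \ {x} := by
      rintro v ⟨a, ha, rfl⟩
      rw [Set.mem_Ioo] at ha
      have hvne : genM R j a ≠ x :=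
        fun e => hxH ⟨a, by rw [Set.mem_Ioo]; exact ha, e⟩
      have hvC := hGhatC a ha.1 ha.2
      have hvnd := nodup_genM hmono ha.1
      have hv1 : ∀ y ∈ genM R j a, 1 ≤ y := fun y hy => one_le_of_mem_genM hmono hR0 ha.1 hy
      have hvc := card_genM (R := R) (t := a) hj1
      rcases monLexGT_total hvne with hGT | hGT
      · have hmem := hGup x hxG.1 hxG.2 (genM R j a) hvnd hv1 hvc hvC hGT
        exact ⟨⟨hmem, hvc⟩, fun e => hvne e⟩
      · obtain ⟨b, hb1, hb2, hbe⟩ := hHup a ha.1 ha.2 x hxnd hx1 hxG.2 hxC hGT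
        exact absurd ⟨b, by rw [Set.mem_Ioo]; exact ⟨hb1, hb2⟩, hbe.symm⟩ hxH
    have h1 := Set.ncard_le_ncard hHsub hGfin.diff
    rw [hHc, Set.ncard_diff_singleton_of_mem hxG, hGc] at h1
    have h3 : 0 < k j := by
      rw [← hGc]
      exact (Set.ncard_pos hGfin).mpr ⟨x, hxG⟩
    omega
  exact Set.eq_of_subset_of_ncard_le hsub (le_of_eq (by rw [hHc, hGc])) hHfin


lemma Rdecomp {R : ℕ → ℕ} (hmono : StrictMono R) (hR0 : R 0 = 0) :
    ∀ i v, 1 ≤ v → v ≤ R i →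
      (∃ s, 1 ≤ s ∧ s ≤ i ∧ v = R s) ∨ (∃ l, 1 ≤ l ∧ l ≤ i ∧ R (l-1) < v ∧ v < R l) := by
  intro i
  induction i with
  | zero => intro v h1 h2; rw [hR0] at h2; omega
  | succ i ihh =>
    intro v h1 h2
    by_cases hv : v ≤ R i
    · rcases ihh v h1 hv with ⟨s, a1, a2, a3⟩ | ⟨l, a1, a2, a3, a4⟩
      · exact Or.inl ⟨s, a1, by omega, a3⟩
      · exact Or.inr ⟨l, a1, by omega, a3, a4⟩
    · push_neg at hv
      rcases eq_or_lt_of_le h2 with he | hlt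
      · exact Or.inl ⟨i+1, by omega, le_rfl, he⟩
      · exact Or.inr ⟨i+1, by omega, le_rfl, by simpa using hv, hlt⟩

def facetSet (R : ℕ → ℕ) (n d i : ℕ) : Finset ℕ :=
  if i = d then (Finset.Icc 1 (d-1)).image R ∪ Finset.Icc (R d) n
  else (Finset.Icc 1 (i-1)).image R ∪ Finset.Icc (R i + 1) n

lemma mem_facetSet {R : ℕ → ℕ} {n d i v : ℕ} :
    v ∈ facetSet R n d i ↔
      ((∃ s, 1 ≤ s ∧ s ≤ i - 1 ∧ v = R s) ∨
        ((if i = d then R d else R i + 1) ≤ v ∧ v ≤ n)) := by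
  unfold facetSet
  by_cases hid : i = d
  · subst hid
    rw [if_pos rfl, if_pos rfl]
    simp only [Finset.mem_union, Finset.mem_image, Finset.mem_Icc]
    constructor
    · rintro (⟨s, ⟨b1, b2⟩, rfl⟩ | hb)
      · exact Or.inl ⟨s, b1, b2, rfl⟩
      · exact Or.inr hb
    · rintro (⟨s, b1, b2, rfl⟩ | hb)
      · exact Or.inl ⟨s, ⟨b1, b2⟩, rfl⟩
      · exact Or.inr hb
  · rw [if_neg hid, if_neg hid]
    simp only [Finset.mem_union, Finset.mem_image, Finset.mem_Icc]
    constructor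
    · rintro (⟨s, ⟨b1, b2⟩, rfl⟩ | hb)
      · exact Or.inl ⟨s, b1, b2, rfl⟩
      · exact Or.inr hb
    · rintro (⟨s, b1, b2, rfl⟩ | hb)
      · exact Or.inl ⟨s, ⟨b1, b2⟩, rfl⟩
      · exact Or.inr hb

/-- facets of a USLI complex.  If Γ is the complex on [n] whose
Stanley-Reisner ideal is the (nonzero) USLI L(k_•) with last nonzero entry k_d, and
R_j = j + k_1 + ⋯ + k_j, then Γ has exactly d facets, namely
F_i = {R_1,…,R_{i-1}} ∪ [R_i+1, n] for 1 ≤ i ≤ d−1 and F_d = {R_1,…,R_{d-1}} ∪ [R_d, n]. -/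
theorem usli_complex_facets (n : ℕ) (L : Set (Multiset ℕ)) (hL : IsUSLI L)
    (hL0 : L.Nonempty)
    (k : ℕ → ℕ) (hk : ∀ i : ℕ, 1 ≤ i → {m ∈ minGen L | Multiset.card m = i}.ncard = k i)
    (d : ℕ) (hd : 1 ≤ d) (hkd : k d ≠ 0) (hlast : ∀ i, d < i → k i = 0)
    (R : ℕ → ℕ) (hR : ∀ j, R j = j + ∑ i ∈ Finset.Icc 1 j, k i)
    (hn : R d ≤ n + 1)
    (Γ : Finset (Finset ℕ)) (hΓV : ∀ F ∈ Γ, F ⊆ Finset.Icc 1 n)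
    (hΓL : ∀ F : Finset ℕ, F ⊆ Finset.Icc 1 n → (F ∈ Γ ↔ (F.val : Multiset ℕ) ∉ L)) :
    (facets Γ).card = d ∧
    (∀ i : ℕ, 1 ≤ i → i < d →
      ((Finset.Icc 1 (i - 1)).image R ∪ Finset.Icc (R i + 1) n) ∈ facets Γ) ∧
    ((Finset.Icc 1 (d - 1)).image R ∪ Finset.Icc (R d) n) ∈ facets Γ ∧
    (∀ F ∈ facets Γ,
      (∃ i : ℕ, 1 ≤ i ∧ i < d ∧
        F = (Finset.Icc 1 (i - 1)).image R ∪ Finset.Icc (R i + 1) n) ∨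
      F = (Finset.Icc 1 (d - 1)).image R ∪ Finset.Icc (R d) n) := by
  classical
  have hmg := minGen_eq L hL k hk d hd hkd hlast R hR
  obtain ⟨hmonI, hsq, hfin, hlexL⟩ := hL
  have hR0 : R 0 = 0 := by rw [hR]; simp
  have hstep : ∀ j : ℕ, R (j+1) = R j + 1 + k (j+1) := by
    intro j
    rw [hR, hR, Finset.sum_Icc_succ_top (by omega)]
    ring
  have hmono : StrictMono R := strictMono_nat_of_lt_succ fun j => by rw [hstep]; omega
  have hzero : (0 : Multiset ℕ) ∉ L := by
    intro h0
    have hempty : {m ∈ minGen L | Multiset.card m = d} = ∅ := by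
      ext m
      simp only [Set.mem_setOf_eq, Set.mem_empty_iff_false, iff_false, not_and]
      intro hm hc
      have h2 := hm.2 0 h0 (Multiset.zero_le m)
      rw [← h2] at hc
      simp at hc
      omega
    have h3 := hk d hd
    rw [hempty] at h3
    simp at h3
    exact hkd h3.symm
  have hcard_le : ∀ g ∈ minGen L, 1 ≤ Multiset.card g ∧ Multiset.card g ≤ d := by
    intro g hg
    constructor
    · by_contra h
      have h2 : Multiset.card g = 0 := by omega
      rw [Multiset.card_eq_zero] at h2
      exact hzero (h2 ▸ hg.1)
    · by_contra h
      push_neg at h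
      have h1 := hk (Multiset.card g) (by omega)
      rw [hlast _ h] at h1
      have h2 : g ∈ {m ∈ minGen L | Multiset.card m = Multiset.card g} := ⟨hg, rfl⟩
      have h4 := (Set.ncard_eq_zero (hfin (Multiset.card g))).mp h1
      rw [h4] at h2
      exact h2
  have hRd : R d = R (d-1) + 1 + k d := by
    have h6 := hstep (d-1)
    have e : d - 1 + 1 = d := by omega
    rw [e] at h6
    exact h6
  have hR1 : ∀ s, 1 ≤ s → 1 ≤ R s := by
    intro s hs
    have := hmono (show 0 < s by omega)
    omega
  have hRle : ∀ s, s ≤ d - 1 → R s ≤ n := by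
    intro s hs
    have h7 : R s ≤ R (d-1) := hmono.monotone hs
    have h8 : R (d-1) < R d := hmono (by omega)
    omega
  have hgenL : ∀ l t, 1 ≤ l → l ≤ d → R (l-1) < t → t < R l → genM R l t ∈ minGen L := by
    intro l t h1 h2 h3 h4
    have h5 : genM R l t ∈ {m ∈ minGen L | Multiset.card m = l} := by
      rw [hmg l h2 h1]
      exact ⟨t, by rw [Set.mem_Ioo]; exact ⟨h3, h4⟩, rfl⟩
    exact h5.1
  have hLchar : ∀ m : Multiset ℕ,
      m ∈ L ↔ ∃ l t, 1 ≤ l ∧ l ≤ d ∧ R (l-1) < t ∧ t < R l ∧ genM R l t ≤ m := by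
    intro m
    constructor
    · intro hm
      obtain ⟨g, hg, hgle⟩ := exists_minGen_le hmonI m hm
      obtain ⟨hc1, hc2⟩ := hcard_le g hg
      have h5 : g ∈ {m ∈ minGen L | Multiset.card m = Multiset.card g} := ⟨hg, rfl⟩
      rw [hmg (Multiset.card g) hc2 hc1] at h5
      obtain ⟨t, ht, he⟩ := h5
      rw [Set.mem_Ioo] at ht
      exact ⟨_, t, hc1, hc2, ht.1, ht.2, by rw [he]; exact hgle⟩
    · rintro ⟨l, t, h1, h2, h3, h4, hle⟩
      exact hmonI _ (hgenL l t h1 h2 h3 h4).1 m hle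
  have hle_iff : ∀ l t (F : Finset ℕ), 1 ≤ l → R (l-1) < t →
      (genM R l t ≤ (F.val : Multiset ℕ) ↔
        ((∀ s, 1 ≤ s → s ≤ l - 1 → R s ∈ F) ∧ t ∈ F)) := by
    intro l t F h1 h3
    rw [Multiset.le_iff_subset (nodup_genM hmono h3), Multiset.subset_iff]
    constructor
    · intro h
      refine ⟨fun s hs1 hs2 => ?_, ?_⟩
      · exact h (mem_genM.mpr (Or.inl ⟨s, hs1, hs2, rfl⟩))
      · exact h (mem_genM.mpr (Or.inr rfl))
    · rintro ⟨hA, hB⟩ x hx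
      rcases mem_genM.mp hx with ⟨s, hs1, hs2, rfl⟩ | rfl
      · exact hA s hs1 hs2
      · exact hB
  have hface : ∀ F : Finset ℕ, F ⊆ Finset.Icc 1 n →
      (F ∈ Γ ↔ ∀ l t, 1 ≤ l → l ≤ d → R (l-1) < t → t < R l →
        ¬((∀ s, 1 ≤ s → s ≤ l - 1 → R s ∈ F) ∧ t ∈ F)) := by
    intro F hFsub
    rw [hΓL F hFsub]
    constructor
    · intro h l t h1 h2 h3 h4 hc
      exact h ((hLchar F.val).mpr ⟨l, t, h1, h2, h3, h4, (hle_iff l t F h1 h3).mpr hc⟩)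
    · intro h hc
      obtain ⟨l, t, h1, h2, h3, h4, hle⟩ := (hLchar F.val).mp hc
      exact h l t h1 h2 h3 h4 ((hle_iff l t F h1 h3).mp hle)
  -- the candidate facets
  have hFsubIcc : ∀ i, 1 ≤ i → i ≤ d → facetSet R n d i ⊆ Finset.Icc 1 n := by
    intro i h1 h2 v hv
    rw [mem_facetSet] at hv
    rw [Finset.mem_Icc]
    rcases hv with ⟨s, b1, b2, rfl⟩ | ⟨b1, b2⟩
    · exact ⟨hR1 s b1, hRle s (by omega)⟩
    · refine ⟨?_, b2⟩
      by_cases hid : i = d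
      · rw [if_pos hid] at b1
        have := hR1 d hd
        omega
      · rw [if_neg hid] at b1
        omega
  have hFinΓ : ∀ i, 1 ≤ i → i ≤ d → facetSet R n d i ∈ Γ := by
    intro i h1 h2
    rw [hface (facetSet R n d i) (hFsubIcc i h1 h2)]
    intro l t hl1 hl2 hl3 hl4 hpair
    obtain ⟨hAll, htF⟩ := hpair
    rw [mem_facetSet] at htF
    rcases htF with ⟨s, b1, b2, rfl⟩ | ⟨b1, b2⟩
    · have e1 : l - 1 < s := by
        by_contra hc; push_neg at hc
        exact absurd hl3 (not_lt.mpr (hmono.monotone hc))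
      have e2 : s < l := by
        by_contra hc; push_neg at hc
        exact absurd hl4 (not_lt.mpr (hmono.monotone hc))
      omega
    · by_cases hid : i = d
      · rw [if_pos hid] at b1
        subst hid
        have : R l ≤ R i := hmono.monotone hl2
        omega
      · rw [if_neg hid] at b1
        have hil : i < l := by
          have h9 : R i < R l := by omega
          exact hmono.lt_iff_lt.mp h9
        have hRiF : R i ∈ facetSet R n d i := hAll i h1 (by omega)
        rw [mem_facetSet, if_neg hid] at hRiF
        rcases hRiF with ⟨s, c1, c2, hc⟩ | ⟨c1, c2⟩
        · have : s = i := hmono.injective hc.symm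
          omega
        · omega
  have hFmax : ∀ i, 1 ≤ i → i ≤ d → ∀ G ∈ Γ, facetSet R n d i ⊆ G → facetSet R n d i = G := by
    intro i h1 h2 G hG hsubG
    by_contra hne
    obtain ⟨v, hvG, hvF⟩ : ∃ v, v ∈ G ∧ v ∉ facetSet R n d i := by
      by_contra hc
      push_neg at hc
      exact hne (Finset.Subset.antisymm hsubG (fun x hx => hc x hx))
    have hGsub := hΓV G hG
    have hGface := (hface G hGsub).mp hG
    have hv1n := Finset.mem_Icc.mp (hGsub hvG)
    rw [mem_facetSet] at hvF
    push_neg at hvF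
    obtain ⟨hvimg, hvicc⟩ := hvF
    have hvlo : v < (if i = d then R d else R i + 1) := by
      by_cases hid : i = d
      · rw [if_pos hid]
        rw [if_pos hid] at hvicc
        by_contra hcc
        push_neg at hcc
        have := hvicc hcc
        omega
      · rw [if_neg hid]
        rw [if_neg hid] at hvicc
        by_contra hcc
        push_neg at hcc
        have := hvicc hcc
        omega
    by_cases hid : i = d
    · subst hid
      rw [if_pos rfl] at hvlo
      rcases Rdecomp hmono hR0 i v hv1n.1 (by omega) with ⟨s, c1, c2, c3⟩ | ⟨l, c1, c2, c3, c4⟩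
      · rcases eq_or_lt_of_le c2 with hsd | hsd
        · rw [hsd] at c3; omega
        · exact (hvimg s c1 (by omega)) c3
      · apply hGface l v c1 (by omega) c3 c4
        refine ⟨fun s hs1 hs2 => hsubG ?_, hvG⟩
        rw [mem_facetSet]
        exact Or.inl ⟨s, hs1, by omega, rfl⟩
    · rw [if_neg hid] at hvlo
      rcases eq_or_lt_of_le (show v ≤ R i by omega) with hvRi | hvRi
      · have hkd1 : 1 ≤ k d := by omega
        apply hGface d (R (d-1) + 1) hd le_rfl (by omega) (by omega)
        constructor
        · intro s hs1 hs2
          by_cases hsi : s ≤ i - 1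
          · exact hsubG (by rw [mem_facetSet]; exact Or.inl ⟨s, hs1, hsi, rfl⟩)
          · by_cases hsi2 : s = i
            · rw [hsi2, ← hvRi]; exact hvG
            · apply hsubG
              rw [mem_facetSet, if_neg hid]
              refine Or.inr ⟨?_, hRle s hs2⟩
              have : R i < R s := hmono (by omega)
              omega
        · apply hsubG
          rw [mem_facetSet, if_neg hid]
          refine Or.inr ⟨?_, ?_⟩
          · have : R i ≤ R (d-1) := hmono.monotone (by omega)
            omega
          · omega
      · rcases Rdecomp hmono hR0 i v hv1n.1 (by omega) with ⟨s, c1, c2, c3⟩ | ⟨l, c1, c2, c3, c4⟩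
        · rcases eq_or_lt_of_le c2 with hsd | hsd
          · rw [hsd] at c3; omega
          · exact (hvimg s c1 (by omega)) c3
        · apply hGface l v c1 (by omega) c3 c4
          refine ⟨fun s hs1 hs2 => hsubG ?_, hvG⟩
          rw [mem_facetSet]
          exact Or.inl ⟨s, hs1, by omega, rfl⟩
  have hfacets_mem : ∀ i, 1 ≤ i → i ≤ d → facetSet R n d i ∈ facets Γ := by
    intro i h1 h2
    rw [facets, Finset.mem_filter]
    exact ⟨hFinΓ i h1 h2, fun G hG hsub => hFmax i h1 h2 G hG hsub⟩
  have hcomplete : ∀ F ∈ facets Γ, ∃ i, 1 ≤ i ∧ i ≤ d ∧ F = facetSet R n d i := by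
    intro F hF
    rw [facets, Finset.mem_filter] at hF
    obtain ⟨hFΓ, hFmaxl⟩ := hF
    have hFsubn := hΓV F hFΓ
    have hFface' := (hface F hFsubn).mp hFΓ
    by_cases hSne : ((Finset.Icc 1 d).filter (fun i => R i ∉ F)).Nonempty
    · set S := (Finset.Icc 1 d).filter (fun i => R i ∉ F) with hS
      set i := S.min' hSne with hi
      have hiS : i ∈ S := S.min'_mem hSne
      rw [hS, Finset.mem_filter, Finset.mem_Icc] at hiS
      obtain ⟨⟨hi1, hi2⟩, hiR⟩ := hiS
      have hilow : ∀ s, 1 ≤ s → s < i → R s ∈ F := by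
        intro s hs1 hs2
        by_contra hc
        have hsS : s ∈ S := by
          rw [hS, Finset.mem_filter, Finset.mem_Icc]
          exact ⟨⟨hs1, by omega⟩, hc⟩
        have := S.min'_le s hsS
        omega
      have hFsubFs : F ⊆ facetSet R n d i := by
        intro v hv
        have hv1n := Finset.mem_Icc.mp (hFsubn hv)
        rw [mem_facetSet]
        by_cases hvRi : R i < v
        · refine Or.inr ⟨?_, hv1n.2⟩
          by_cases hid : i = d
          · rw [if_pos hid, ← hid]; omega
          · rw [if_neg hid]; omega
        · push_neg at hvRi
          rcases eq_or_lt_of_le hvRi with he | hlt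
          · exact absurd (he ▸ hv) hiR
          · rcases Rdecomp hmono hR0 i v hv1n.1 (by omega) with ⟨s, c1, c2, c3⟩ | ⟨l, c1, c2, c3, c4⟩
            · rcases eq_or_lt_of_le c2 with hsd | hsd
              · rw [hsd] at c3; omega
              · exact Or.inl ⟨s, c1, by omega, c3⟩
            · exfalso
              apply hFface' l v c1 (by omega) c3 c4
              exact ⟨fun s hs1 hs2 => hilow s hs1 (by omega), hv⟩
      exact ⟨i, hi1, hi2, hFmaxl (facetSet R n d i) (hFinΓ i hi1 hi2) hFsubFs⟩
    · have hall : ∀ s, 1 ≤ s → s ≤ d → R s ∈ F := by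
        intro s hs1 hs2
        by_contra hc
        exact hSne ⟨s, by rw [Finset.mem_filter, Finset.mem_Icc]; exact ⟨⟨hs1, hs2⟩, hc⟩⟩
      have hFsubFs : F ⊆ facetSet R n d d := by
        intro v hv
        have hv1n := Finset.mem_Icc.mp (hFsubn hv)
        rw [mem_facetSet, if_pos rfl]
        by_cases hvRd : R d ≤ v
        · exact Or.inr ⟨hvRd, hv1n.2⟩
        · push_neg at hvRd
          rcases Rdecomp hmono hR0 d v hv1n.1 (by omega) with ⟨s, c1, c2, c3⟩ | ⟨l, c1, c2, c3, c4⟩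
          · rcases eq_or_lt_of_le c2 with hsd | hsd
            · rw [hsd] at c3; omega
            · exact Or.inl ⟨s, c1, by omega, c3⟩
          · exfalso
            apply hFface' l v c1 (by omega) c3 c4
            exact ⟨fun s hs1 hs2 => hall s hs1 (by omega), hv⟩
      exact ⟨d, hd, le_rfl, hFmaxl (facetSet R n d d) (hFinΓ d hd le_rfl) hFsubFs⟩
  have hfeq : facets Γ = (Finset.Icc 1 d).image (facetSet R n d) := by
    ext F
    rw [Finset.mem_image]
    constructor
    · intro hF
      obtain ⟨i, h1, h2, he⟩ := hcomplete F hF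
      exact ⟨i, Finset.mem_Icc.mpr ⟨h1, h2⟩, he.symm⟩
    · rintro ⟨i, hi, rfl⟩
      rw [Finset.mem_Icc] at hi
      exact hfacets_mem i hi.1 hi.2
  have hRnotin : ∀ i, 1 ≤ i → i < d → R i ∉ facetSet R n d i := by
    intro i h1 h2 hmem
    rw [mem_facetSet, if_neg (by omega)] at hmem
    rcases hmem with ⟨s, c1, c2, c3⟩ | ⟨c1, c2⟩
    · have : s = i := hmono.injective c3.symm
      omega
    · omega
  have hRin : ∀ i j', 1 ≤ i → i < j' → j' ≤ d → R i ∈ facetSet R n d j' := by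
    intro i j' h1 h2 h3
    rw [mem_facetSet]
    exact Or.inl ⟨i, h1, by omega, rfl⟩
  have hcard : (facets Γ).card = d := by
    rw [hfeq, Finset.card_image_of_injOn, Nat.card_Icc]
    · omega
    · intro a ha b hb he
      rw [Finset.coe_Icc, Set.mem_Icc] at ha hb
      by_contra hne
      rcases Nat.lt_or_ge a b with hab | hab
      · have hx := hRin a b ha.1 hab hb.2
        rw [← he] at hx
        exact hRnotin a ha.1 (by omega) hx
      · have hba : b < a := by omega
        have hx := hRin b a hb.1 hba ha.2
        rw [he] at hx
        exact hRnotin b hb.1 (by omega) hx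
  have hFSne : ∀ i, i ≠ d →
      facetSet R n d i = (Finset.Icc 1 (i-1)).image R ∪ Finset.Icc (R i + 1) n := by
    intro i h
    unfold facetSet
    rw [if_neg h]
  have hFSd : facetSet R n d d = (Finset.Icc 1 (d-1)).image R ∪ Finset.Icc (R d) n := by
    unfold facetSet
    rw [if_pos rfl]
  refine ⟨hcard, ?_, ?_, ?_⟩
  · intro i h1 h2
    rw [← hFSne i (by omega)]
    exact hfacets_mem i h1 (by omega)
  · rw [← hFSd]
    exact hfacets_mem d hd le_rfl
  · intro F hF
    obtain ⟨i, h1, h2, he⟩ := hcomplete F hF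
    by_cases hid : i = d
    · right
      rw [he, hid, hFSd]
    · left
      exact ⟨i, h1, by omega, by rw [he, hFSne i hid]⟩
end

section
/- Let Γ be a simplicial complex on [n] that is a cone with apex n (every facet contains n), and suppose I is an almost USLI whose generators involve only x_1,...,x_n with all minimal generators divisible by x_1 except possibly the last. If the first l generators are divisible by x_1 and the last generator is m_{l+1} = x_2 x_3 ⋯ x_{d+1}, then each set [n] \ {1, i} for 2 ≤ i ≤ d+1 is a facet of Γ, and moreover some facet contains 1, so Γ has at least d+1 facets. -/
lemma exists_minGen {I : Set (Multiset ℕ)} (_hmon : IsMonIdeal I) :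
    ∀ m ∈ I, ∃ g ∈ minGen I, g ≤ m := by
  intro m
  induction m using Multiset.strongInductionOn with
  | ih m ih =>
    intro hm
    by_cases h : ∀ m' ∈ I, m' ≤ m → m' = m
    · exact ⟨m, ⟨hm, h⟩, le_rfl⟩
    · push_neg at h
      obtain ⟨m', hm', hle, hne⟩ := h
      obtain ⟨g, hg, hgle⟩ := ih m' (lt_of_le_of_ne hle hne) hm'
      exact ⟨g, hg, hgle.trans hle⟩

lemma exists_facet (Γ : Finset (Finset ℕ)) (F : Finset ℕ) (hF : F ∈ Γ) :
    ∃ G ∈ facets Γ, F ⊆ G := by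
  obtain ⟨G, hG, hmax⟩ := Finset.exists_max_image (Γ.filter fun G => F ⊆ G)
    Finset.card ⟨F, by simp [hF]⟩
  rw [Finset.mem_filter] at hG
  refine ⟨G, ?_, hG.2⟩
  rw [facets, Finset.mem_filter]
  refine ⟨hG.1, fun G' hG' hsub => ?_⟩
  exact Finset.eq_of_subset_of_card_le hsub
    (hmax G' (Finset.mem_filter.2 ⟨hG', hG.2.trans hsub⟩))

lemma keyL : ∀ (k c : ℕ) (s t : List ℕ), List.Pairwise (· < ·) s → (∀ x ∈ s, c ≤ x) →
    List.Pairwise (· ≤ ·) t → (∀ x ∈ t, c ≤ x) → (∀ j, c ≤ j → j < c + k → j ∈ t) →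
    List.Lex (· < ·) s t → t.length ≤ s.length → ∀ j, c ≤ j → j < c + k → j ∈ s := by
  intro k
  induction k with
  | zero => intro c s t _ _ _ _ _ _ _ j hj1 hj2; omega
  | succ k ih =>
    intro c s t hs hsc ht htc htmem hlex hlen j hj1 hj2
    have hct : c ∈ t := htmem c le_rfl (by omega)
    obtain ⟨b, t₂, rfl⟩ : ∃ b t₂, t = b :: t₂ := by
      cases t with
      | nil => simp at hct
      | cons b t₂ => exact ⟨b, t₂, rfl⟩
    have hbt₂ := (List.pairwise_cons.1 ht).1
    have hb : b = c := le_antisymm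
      (by rcases List.mem_cons.1 hct with h | h; · omega
          · exact hbt₂ c h) (htc b (.head _))
    subst hb
    obtain ⟨a, s₂, rfl⟩ : ∃ a s₂, s = a :: s₂ := by
      cases s with
      | nil => simp at hlen
      | cons a s₂ => exact ⟨a, s₂, rfl⟩
    have hsa := (List.pairwise_cons.1 hs).1
    cases hlex with
    | rel hab => exact absurd hab (by have := hsc a (.head _); omega)
    | cons h2 =>
      rcases eq_or_ne j b with rfl | hjb
      · exact .head _
      have hjge : b + 1 ≤ j := by have := hj1; omega
      have hs₂c : ∀ x ∈ s₂, b + 1 ≤ x := fun x hx => hsa x hx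
      cases t₂ with
      | nil => exact absurd h2 (by intro h'; cases h')
      | cons b₂ t₃ =>
        have hb₂ : b + 1 ≤ b₂ := by
          rcases Nat.lt_or_ge b b₂ with h | h
          · omega
          · exfalso
            have hb₂b : b₂ = b := le_antisymm h (htc b₂ (by simp))
            subst hb₂b
            obtain ⟨a₂, s₃, rfl⟩ : ∃ a₂ s₃, s₂ = a₂ :: s₃ := by
              cases s₂ with
              | nil => simp at hlen
              | cons a₂ s₃ => exact ⟨a₂, s₃, rfl⟩
            have ha₂ := hs₂c a₂ (.head _)
            cases h2 with
            | rel h => omega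
            | cons h => omega
        refine List.mem_cons_of_mem _ (ih (b+1) s₂ (b₂ :: t₃)
          (List.pairwise_cons.1 hs).2 hs₂c (List.pairwise_cons.1 ht).2
          ?_ ?_ h2 (by simpa using hlen) j hjge (by omega))
        · intro x hx
          have := (List.pairwise_cons.1 (List.pairwise_cons.1 ht).2).1
          rcases List.mem_cons.1 hx with rfl | h
          · omega
          · have := this x h; omega
        · intro j' hj1' hj2'
          have := htmem j' (by omega) (by omega)
          rcases List.mem_cons.1 this with rfl | h
          · omega
          · exact h

lemma mlast_le_of_lex (d : ℕ) {m m' : Multiset ℕ}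
    (hnd : m'.Nodup) (hpos : ∀ x ∈ m', 2 ≤ x)
    (hcard : Multiset.card m' = Multiset.card m)
    (hne : m ≠ 0)
    (hml : (∀ x ∈ m, 2 ≤ x) → ((Finset.Icc 2 (d+1)).val : Multiset ℕ) ≤ m)
    (hlex : monLexGT m' m) :
    ((Finset.Icc 2 (d+1)).val : Multiset ℕ) ≤ m' := by
  have hmems : ∀ x : ℕ, x ∈ m'.sort (· ≤ ·) ↔ x ∈ m' := fun x => Multiset.mem_sort _
  have hmemt : ∀ x : ℕ, x ∈ m.sort (· ≤ ·) ↔ x ∈ m := fun x => Multiset.mem_sort _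
  have hss := Multiset.pairwise_sort m' (· ≤ ·)
  have hts := Multiset.pairwise_sort m (· ≤ ·)
  have hsnd : (m'.sort (· ≤ ·)).Nodup := by
    rw [← Multiset.coe_nodup, Multiset.sort_eq]; exact hnd
  have hslt := (hss.and hsnd).imp (fun h => lt_of_le_of_ne h.1 h.2)
  have hsc : ∀ x ∈ m'.sort (· ≤ ·), 2 ≤ x := fun x hx => hpos x ((hmems x).1 hx)
  obtain ⟨b, t₂, hbt⟩ : ∃ b t₂, m.sort (· ≤ ·) = b :: t₂ := by
    cases htT : m.sort (· ≤ ·) with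
    | nil =>
      exact absurd (by rw [← Multiset.sort_eq m (· ≤ ·), htT]; rfl) hne
    | cons b t₂ => exact ⟨b, t₂, rfl⟩
  obtain ⟨a, s₂, hat⟩ : ∃ a s₂, m'.sort (· ≤ ·) = a :: s₂ := by
    cases hsT : m'.sort (· ≤ ·) with
    | nil =>
      exfalso
      have h1 : Multiset.card m' = 0 := by
        rw [← Multiset.length_sort (s := m') (· ≤ ·), hsT]; rfl
      have h2 : (m.sort (· ≤ ·)).length = 0 := by
        rw [Multiset.length_sort, ← hcard, h1]
      rw [hbt] at h2; simp at h2
    | cons a s₂ => exact ⟨a, s₂, rfl⟩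
  have ha2 : 2 ≤ a := hsc a (by rw [hat]; exact .head _)
  have hb2 : 2 ≤ b := by
    have hl := hlex
    unfold monLexGT at hl
    rw [hat, hbt] at hl
    cases hl with
    | rel h => omega
    | cons h => omega
  have h2m : ∀ x ∈ m, 2 ≤ x := by
    intro x hx
    rw [← hmemt] at hx
    rw [hbt] at hx
    rcases List.mem_cons.1 hx with rfl | h
    · omega
    · have := (List.pairwise_cons.1 (hbt ▸ hts)).1 x h; omega
  have hmlm := hml h2m
  have hkey := keyL d 2 (m'.sort (· ≤ ·)) (m.sort (· ≤ ·)) hslt hsc hts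
    (fun x hx => h2m x ((hmemt x).1 hx))
    (fun j hj1 hj2 => (hmemt j).2 (Multiset.mem_of_le hmlm
      (Finset.mem_def.1 (Finset.mem_Icc.2 ⟨hj1, by omega⟩))))
    hlex
    (by rw [Multiset.length_sort, Multiset.length_sort, hcard])
  rw [Multiset.le_iff_subset (Finset.Icc 2 (d+1)).nodup]
  intro j hj
  have hj' := Finset.mem_Icc.1 (Finset.mem_def.2 hj)
  exact (hmems j).1 (hkey j hj'.1 (by omega))

/-- Case 1 of Lemma on almost USLIs: let Γ be a complex on [n] that is a
cone with apex n (every facet contains n), whose Stanley-Reisner ideal I is an almost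
USLI with generators m_1 >_lex ⋯ >_lex m_l >_lex m_{l+1} involving only x_1,…,x_n, where
m_1,…,m_l are divisible by x_1 and m_{l+1} = x_2 x_3 ⋯ x_{d+1}.  Then each set
[n] \ {1, i} for 2 ≤ i ≤ d+1 is a facet of Γ, some facet contains 1, and Γ has at least
d + 1 facets. -/
theorem almost_usli_case_one (n d l : ℕ) (hd : 1 ≤ d) (hdn : d + 1 ≤ n)
    (I : Set (Multiset ℕ)) (gens : List (Multiset ℕ)) (hlen : gens.length = l)
    (mlast : Multiset ℕ) (hmlast : mlast = (Finset.Icc 2 (d + 1)).val)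
    (hgen : minGen I = {m | m ∈ gens} ∪ {mlast})
    (hI : IsSqStable I)
    (hdiv : ∀ m ∈ gens, (1 : ℕ) ∈ m)
    (hsupp : ∀ m ∈ minGen I, ∀ x ∈ m, x ≤ n)
    (horder : ∀ m ∈ gens, gradedLexGT m mlast)
    (hUSLIhead : IsUSLI (idealGen {m | m ∈ gens}))
    (hnotUSLI : ¬ IsUSLI I)
    (Γ : Finset (Finset ℕ)) (hΓV : ∀ F ∈ Γ, F ⊆ Finset.Icc 1 n)
    (hΓL : ∀ F : Finset ℕ, F ⊆ Finset.Icc 1 n → (F ∈ Γ ↔ (F.val : Multiset ℕ) ∉ I))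
    (hcone : ∀ F ∈ facets Γ, n ∈ F) :
    (∀ i : ℕ, 2 ≤ i → i ≤ d + 1 →
      (Finset.Icc 1 n \ {1, i} : Finset ℕ) ∈ facets Γ) ∧
    (∃ F ∈ facets Γ, (1 : ℕ) ∈ F) ∧
    d + 1 ≤ (facets Γ).card := by
  
  have hK2 : (2:ℕ) ∈ Finset.Icc 2 (d+1) := Finset.mem_Icc.2 ⟨le_rfl, by omega⟩
  have hmlmin : mlast ∈ minGen I := by rw [hgen]; right; rfl
  have hgmin : ∀ g ∈ gens, g ∈ minGen I := fun g hg => by rw [hgen]; left; exact hg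
  have hmemI : ∀ m : Multiset ℕ, m ∈ I ↔ (∃ g ∈ gens, g ≤ m) ∨ mlast ≤ m := by
    intro m
    constructor
    · intro hm
      obtain ⟨g, hg, hle⟩ := exists_minGen hI.1 m hm
      rw [hgen] at hg
      rcases hg with hg | hg
      · exact Or.inl ⟨g, hg, hle⟩
      · exact Or.inr (hg ▸ hle)
    · rintro (⟨g, hg, hle⟩ | hle)
      · exact hI.1 g (hgmin g hg).1 m hle
      · exact hI.1 mlast hmlmin.1 m hle
  have hΓiff : ∀ F : Finset ℕ, F ⊆ Finset.Icc 1 n →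
      (F ∈ Γ ↔ (∀ g ∈ gens, ¬ g ≤ (F.val : Multiset ℕ)) ∧ ¬ Finset.Icc 2 (d+1) ⊆ F) := by
    intro F hF
    rw [hΓL F hF]
    constructor
    · intro h
      refine ⟨fun g hg hle => h ((hmemI _).2 (Or.inl ⟨g, hg, hle⟩)),
        fun hsub => h ((hmemI _).2 (Or.inr ?_))⟩
      rw [hmlast]; exact Finset.val_le_iff.2 hsub
    · rintro ⟨h1, h2⟩ hFI
      rcases (hmemI _).1 hFI with ⟨g, hg, hle⟩ | hle
      · exact h1 g hg hle
      · exact h2 (Finset.val_le_iff.1 (hmlast ▸ hle))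
  have h1ml : (1:ℕ) ∉ mlast := by rw [hmlast]; simp
  have hvI : ∀ i ∈ Finset.Icc 2 (d+1),
      ((insert 1 ((Finset.Icc 2 (d+1)).erase i)).val : Multiset ℕ) ∈ I := by
    intro i hi
    have hi2 := Finset.mem_Icc.1 hi
    have hst := hI.2.2 mlast hmlmin 1 i le_rfl (by omega)
      (by rw [hmlast]; exact Finset.mem_def.1 hi) h1ml
    have hval : ((insert 1 ((Finset.Icc 2 (d+1)).erase i)).val : Multiset ℕ)
        = 1 ::ₘ mlast.erase i := by
      rw [Finset.insert_val_of_notMem (by simp), Finset.erase_val, hmlast]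
    rwa [hval]
  have hfacet : ∀ i : ℕ, 2 ≤ i → i ≤ d + 1 →
      (Finset.Icc 1 n \ {1, i} : Finset ℕ) ∈ facets Γ := by
    intro i h2i hid
    have hiK : i ∈ Finset.Icc 2 (d+1) := Finset.mem_Icc.2 ⟨h2i, hid⟩
    have hFsub : Finset.Icc 1 n \ {1, i} ⊆ Finset.Icc 1 n := Finset.sdiff_subset
    have h1F : (1:ℕ) ∉ Finset.Icc 1 n \ {1, i} := by simp
    have hiF : i ∉ Finset.Icc 1 n \ {1, i} := by simp
    have hKsubF : ∀ y ∈ Finset.Icc 2 (d+1), y ≠ i → y ∈ Finset.Icc 1 n \ {1, i} := by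
      intro y hy hyi
      have hy2 := Finset.mem_Icc.1 hy
      simp only [Finset.mem_sdiff, Finset.mem_Icc, Finset.mem_insert, Finset.mem_singleton]
      refine ⟨⟨by omega, by omega⟩, ?_⟩
      push_neg
      exact ⟨by omega, hyi⟩
    have hFΓ : Finset.Icc 1 n \ {1, i} ∈ Γ := by
      rw [hΓiff _ hFsub]
      exact ⟨fun g hg hle => h1F (Finset.mem_def.2 (Multiset.mem_of_le hle (hdiv g hg))),
        fun hsub => hiF (hsub hiK)⟩
    rw [facets, Finset.mem_filter]
    refine ⟨hFΓ, fun G hG hFG => ?_⟩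
    have hGsub := hΓV G hG
    refine Finset.Subset.antisymm hFG ?_
    intro x hxG
    have hxn := hGsub hxG
    by_contra hxF
    have hx1i : x = 1 ∨ x = i := by
      simp only [Finset.mem_sdiff, Finset.mem_insert, Finset.mem_singleton] at hxF
      have := Finset.mem_Icc.1 hxn
      tauto
    rcases hx1i with rfl | rfl
    · have hsub2 : insert 1 ((Finset.Icc 2 (d+1)).erase i) ⊆ G := by
        intro y hy
        rcases Finset.mem_insert.1 hy with rfl | hy'
        · exact hxG
        · exact hFG (hKsubF y (Finset.mem_of_mem_erase hy') (Finset.ne_of_mem_erase hy'))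
      have hGI : (G.val : Multiset ℕ) ∈ I := hI.1 _ (hvI i hiK) _ (Finset.val_le_iff.2 hsub2)
      exact absurd hGI ((hΓL G hGsub).1 hG)
    · have hsub2 : Finset.Icc 2 (d+1) ⊆ G := by
        intro y hy
        by_cases hyi : y = x
        · exact hyi ▸ hxG
        · exact hFG (hKsubF y hy hyi)
      exact absurd hsub2 ((hΓiff G hGsub).1 hG).2
  have hn2 : 2 ≤ n := by omega
  have hsub1 : ({1} : Finset ℕ) ⊆ Finset.Icc 1 n := by
    intro x hx
    rw [Finset.mem_singleton] at hx
    subst hx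
    exact Finset.mem_Icc.2 ⟨le_rfl, by omega⟩
  have h1Γ : ({1} : Finset ℕ) ∈ Γ := by
    rw [hΓiff _ hsub1]
    constructor
    · intro g hg hle
      rw [Finset.singleton_val] at hle
      have h1g : (1:ℕ) ∈ g := hdiv g hg
      have hgeq : g = {1} := le_antisymm hle (Multiset.singleton_le.2 h1g)
      exfalso
      apply hnotUSLI
      have hg1 : ({1} : Multiset ℕ) ∈ gens := hgeq ▸ hg
      refine ⟨hI.1, hI.2.1, fun dd => ?_, ?_⟩
      · have hfin : (minGen I).Finite := by
          rw [hgen]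
          exact gens.finite_toSet.union (Set.finite_singleton _)
        exact hfin.subset (fun m hm => hm.1)
      · intro m hm m' hnd' hpos' hcard' hlex'
        by_cases h1m' : (1:ℕ) ∈ m'
        · exact hI.1 {1} (hgmin _ hg1).1 m' (Multiset.singleton_le.2 h1m')
        · have hpos2 : ∀ x ∈ m', 2 ≤ x := by
            intro x hx
            have h1x := hpos' x hx
            rcases Nat.lt_or_ge x 2 with h | h
            · have hx1 : x = 1 := by omega
              exact absurd (hx1 ▸ hx) h1m'
            · exact h
          have hne : m ≠ 0 := by
            rintro rfl
            rcases (hmemI 0).1 hm with ⟨g', hg', hle'⟩ | hle'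
            · have := Multiset.mem_of_le hle' (hdiv g' hg')
              simp at this
            · have h2ml : (2:ℕ) ∈ mlast := by
                rw [hmlast]; exact Finset.mem_def.1 hK2
              have := Multiset.mem_of_le hle' h2ml
              simp at this
          have hml2 : (∀ x ∈ m, 2 ≤ x) → ((Finset.Icc 2 (d+1)).val : Multiset ℕ) ≤ m := by
            intro h2
            rcases (hmemI m).1 hm with ⟨g', hg', hle'⟩ | hle'
            · have h1m := Multiset.mem_of_le hle' (hdiv g' hg')
              have := h2 1 h1m
              omega
            · exact hmlast ▸ hle'
          have hfin := mlast_le_of_lex d hnd' hpos2 hcard' hne hml2 hlex'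
          exact hI.1 mlast hmlmin.1 m' (by rw [hmlast]; exact hfin)
    · intro hsub
      have := hsub hK2
      simp at this
  obtain ⟨F₀, hF₀, hsubF₀⟩ := exists_facet Γ {1} h1Γ
  have h1F₀ : (1:ℕ) ∈ F₀ := hsubF₀ (Finset.mem_singleton_self 1)
  refine ⟨hfacet, ⟨F₀, hF₀, h1F₀⟩, ?_⟩
  have himg : (Finset.Icc 2 (d+1)).image (fun i => Finset.Icc 1 n \ {1, i}) ∪ {F₀}
      ⊆ facets Γ := by
    intro G hG
    rcases Finset.mem_union.1 hG with hG | hG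
    · obtain ⟨i, hi, rfl⟩ := Finset.mem_image.1 hG
      have hi2 := Finset.mem_Icc.1 hi
      exact hfacet i hi2.1 hi2.2
    · rw [Finset.mem_singleton] at hG
      subst hG
      exact hF₀
  have hcard1 : ((Finset.Icc 2 (d+1)).image (fun i => Finset.Icc 1 n \ {1, i})).card = d := by
    rw [Finset.card_image_of_injOn, Nat.card_Icc]
    · omega
    · intro i hi j hj hij
      by_contra hne
      have hi2 := Finset.mem_Icc.1 hi
      have hj2 := Finset.mem_Icc.1 hj
      have hjmem : j ∈ Finset.Icc 1 n \ {1, i} := by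
        simp only [Finset.mem_sdiff, Finset.mem_Icc, Finset.mem_insert, Finset.mem_singleton]
        refine ⟨⟨by omega, by omega⟩, ?_⟩
        push_neg
        exact ⟨by omega, fun h => hne h.symm⟩
      have hij' : Finset.Icc 1 n \ {1, i} = Finset.Icc 1 n \ {1, j} := hij
      rw [hij'] at hjmem
      simp at hjmem
  have hF₀nm : F₀ ∉ (Finset.Icc 2 (d+1)).image (fun i => Finset.Icc 1 n \ {1, i}) := by
    intro hmem
    obtain ⟨i, hi, heq⟩ := Finset.mem_image.1 hmem
    rw [← heq] at h1F₀
    simp at h1F₀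
  calc d + 1
      = ((Finset.Icc 2 (d+1)).image (fun i => Finset.Icc 1 n \ {1, i}) ∪ {F₀}).card := by
        rw [Finset.card_union_of_disjoint (Finset.disjoint_singleton_right.2 hF₀nm),
          hcard1, Finset.card_singleton]
    _ ≤ (facets Γ).card := Finset.card_le_card himg
end
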